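/- arXiv:2501.13730 — 10 statements merged into one kernel-verified Lean document; each statement's English description precedes it below -/
import Mathlib

section
/- Let d ∈ ℕ and n₁,…,n_d ∈ ℕ, and let X := [n₁] × ⋯ × [n_d]. Every permutation σ : X → X can be expressed as a composition σ = σ₁ ∘ ⋯ ∘ σ_{2d−1} of 2d−1 one-dimensional permutations. -/
/-!
Split the box as `A × B`, with `A` the first coordinate. For a permutation `σ` of `A × B`, the
pairs `(x.2, (σ x).2)` are the edges of an `|A|`-regular bipartite multigraph on `B ⊔ B`; by
Hall's theorem it splits into `|A|` perfect matchings. A colouring `col : A × B → A` by matchings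
makes `h x = (col x, x.2)` and `p x = (col x, (σ x).2)` bijections, so `σ = (σ p⁻¹) (p h⁻¹) h`,
where the outer factors fix the `B`-coordinate and the middle one fixes the `A`-coordinate, i.e.
is a family of permutations of `B` indexed by `A`. Factoring every member of that family along
the same coordinate sequence `1, 2, …, d - 1, …, 2, 1` (induction on `d`) yields the `2d - 1`
factors, along `0, 1, …, d - 1, …, 1, 0`.
-/

/-- A permutation of a box `[n 0] × ⋯ × [n (d-1)]` is one-dimensional if there is a
coordinate `i` such that it changes only the `i`-th coordinate of each point. -/
def IsOneDimensional {d : ℕ} {n : Fin d → ℕ} (σ : Equiv.Perm (∀ i, Fin (n i))) : Prop :=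
  ∃ i, ∀ x, ∀ j, j ≠ i → σ x j = x j

open Finset Function

section RegularBipartite

variable {γ B : Type*} {E : Finset γ} {k : ℕ} {s t : γ → B}

lemma card_filter_mem_eq_mul [DecidableEq B] {f : γ → B} (hf : ∀ b, #{e ∈ E | f e = b} = k)
    (S : Finset B) : #{e ∈ E | f e ∈ S} = k * #S := by
  rw [card_eq_sum_card_fiberwise (s := {e ∈ E | f e ∈ S}) (t := S)
    fun e he => (mem_filter.1 he).2]
  calc ∑ b ∈ S, #{e ∈ {e ∈ E | f e ∈ S} | f e = b} = ∑ _b ∈ S, k := by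
        refine sum_congr rfl fun b hb => ?_
        rw [filter_filter, ← hf b]
        exact congrArg card (filter_congr fun e _ => and_iff_right_of_imp fun h => h ▸ hb)
    _ = k * #S := by rw [sum_const, smul_eq_mul, mul_comm]

theorem exists_perfectMatching_of_regular [DecidableEq B] [Fintype B] (hk : k ≠ 0)
    (hs : ∀ b, #{e ∈ E | s e = b} = k) (ht : ∀ b, #{e ∈ E | t e = b} = k) :
    ∃ M : B → γ, (∀ b, M b ∈ E ∧ s (M b) = b) ∧ Bijective (t ∘ M) := by
  set N : B → Finset B := fun b => {e ∈ E | s e = b}.image t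
  have hall : ∀ S : Finset B, #S ≤ #(S.biUnion N) := by
    intro S
    have hsub : {e ∈ E | s e ∈ S} ⊆ {e ∈ E | t e ∈ S.biUnion N} := by
      intro e he
      rw [mem_filter] at he ⊢
      exact ⟨he.1, mem_biUnion.2 ⟨s e, he.2, mem_image_of_mem t (mem_filter.2 ⟨he.1, rfl⟩)⟩⟩
    have := card_le_card hsub
    rw [card_filter_mem_eq_mul hs, card_filter_mem_eq_mul ht] at this
    exact Nat.le_of_mul_le_mul_left this (Nat.pos_of_ne_zero hk)
  obtain ⟨g, hg, hgN⟩ := (all_card_le_biUnion_card_iff_exists_injective N).1 hall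
  have : ∀ b, ∃ e, (e ∈ E ∧ s e = b) ∧ t e = g b := fun b => by
    simpa only [N, mem_image, mem_filter] using hgN b
  choose M hM hMg using this
  refine ⟨M, hM, ?_⟩
  rw [← Finite.injective_iff_bijective, show t ∘ M = g from funext hMg]
  exact hg

lemma card_filter_sdiff_image [DecidableEq B] [Fintype B] [DecidableEq γ] {f : γ → B}
    {M : B → γ} (hM : ∀ b, M b ∈ E) (hfM : Bijective (f ∘ M)) (b : B) :
    #{e ∈ E \ univ.image M | f e = b} = #{e ∈ E | f e = b} - 1 := by
  obtain ⟨b₀, hb₀⟩ := hfM.2 b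
  have : {e ∈ E \ univ.image M | f e = b} = {e ∈ E | f e = b}.erase (M b₀) := by
    ext e
    simp only [mem_filter, mem_sdiff, mem_image, mem_univ, true_and, mem_erase]
    constructor
    · rintro ⟨⟨he, hne⟩, hfe⟩
      exact ⟨fun h => hne ⟨b₀, h.symm⟩, he, hfe⟩
    · rintro ⟨hne, he, hfe⟩
      refine ⟨⟨he, ?_⟩, hfe⟩
      rintro ⟨b', rfl⟩
      exact hne (congrArg M (hfM.1 (hfe.trans hb₀.symm)))
  rw [this, card_erase_of_mem (mem_filter.2 ⟨hM b₀, hb₀⟩)]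

lemma injOn_ite_mem_image [Fintype B] [DecidableEq γ] {f : γ → B} {M : B → γ} {c : γ → ℕ}
    (hfM : Injective (f ∘ M)) (hc : ∀ e ∈ E \ univ.image M, c e < k)
    (hinj : Set.InjOn (fun e => (c e, f e)) ↑(E \ univ.image M)) :
    Set.InjOn (fun e => (if e ∈ univ.image M then k else c e, f e)) E := by
  intro e he e' he' hee'
  obtain ⟨hce, hfe⟩ := Prod.mk.inj hee'
  by_cases hm : e ∈ univ.image M <;> by_cases hm' : e' ∈ univ.image M <;>
    simp only [hm, hm', if_true, if_false] at hce
  · obtain ⟨b, -, rfl⟩ := mem_image.1 hm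
    obtain ⟨b', -, rfl⟩ := mem_image.1 hm'
    exact congrArg M (hfM hfe)
  · exact absurd hce (hc e' (mem_sdiff.2 ⟨he', hm'⟩)).ne'
  · exact absurd hce (hc e (mem_sdiff.2 ⟨he, hm⟩)).ne
  · exact hinj (mem_sdiff.2 ⟨he, hm⟩) (mem_sdiff.2 ⟨he', hm'⟩) (Prod.ext hce hfe)

theorem exists_edgeColoring_of_regular [DecidableEq B] [Fintype B] [DecidableEq γ]
    (hs : ∀ b, #{e ∈ E | s e = b} = k) (ht : ∀ b, #{e ∈ E | t e = b} = k) :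
    ∃ c : γ → ℕ, (∀ e ∈ E, c e < k) ∧ Set.InjOn (fun e => (c e, s e)) E ∧
      Set.InjOn (fun e => (c e, t e)) E := by
  induction k generalizing E with
  | zero =>
    have : E = ∅ := eq_empty_of_forall_notMem fun e he =>
      (card_pos.2 ⟨e, mem_filter.2 ⟨he, rfl⟩⟩ : 0 < #{e' ∈ E | s e' = s e}).ne' (hs (s e))
    subst this
    exact ⟨0, by simp, by simp, by simp⟩
  | succ k ih =>
    obtain ⟨M, hM, hMt⟩ := exists_perfectMatching_of_regular k.succ_ne_zero hs ht
    have hMs : Bijective (s ∘ M) := by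
      rw [show s ∘ M = id from funext fun b => (hM b).2]
      exact bijective_id
    obtain ⟨c, hc, hcs, hct⟩ := ih (E := E \ univ.image M)
      (fun b => by rw [card_filter_sdiff_image (fun b => (hM b).1) hMs, hs]; rfl)
      (fun b => by rw [card_filter_sdiff_image (fun b => (hM b).1) hMt, ht]; rfl)
    refine ⟨fun e => if e ∈ univ.image M then k else c e, fun e he => ?_,
      injOn_ite_mem_image hMs.1 hc hcs, injOn_ite_mem_image hMt.1 hc hct⟩
    dsimp only
    split_ifs with hm
    · exact k.lt_succ_self
    · exact (hc e (mem_sdiff.2 ⟨he, hm⟩)).trans k.lt_succ_self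

end RegularBipartite

namespace Equiv.Perm

theorem exists_prodCongrRight_eq {C B : Type*} (g : Perm (C × B)) (hg : ∀ y, (g y).1 = y.1) :
    ∃ u : C → Perm B, prodCongrRight u = g := by
  have hg_symm : ∀ y, (g.symm y).1 = y.1 := fun y => by
    simpa using (hg (g.symm y)).symm
  have hfib : ∀ c b, (c, (g (c, b)).2) = g (c, b) := fun c b => Prod.ext (hg (c, b)).symm rfl
  have hfib_symm : ∀ c b, (c, (g.symm (c, b)).2) = g.symm (c, b) := fun c b =>
    Prod.ext (hg_symm (c, b)).symm rfl
  refine ⟨fun c => ⟨fun b => (g (c, b)).2, fun b => (g.symm (c, b)).2, fun b => ?_, fun b => ?_⟩,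
    ?_⟩
  · simp only [hfib, symm_apply_apply]
  · simp only [hfib_symm, apply_symm_apply]
  · ext ⟨c, b⟩
    · exact (hg (c, b)).symm
    · rfl

def prodCongrRightHom (C B : Type*) : (C → Perm B) →* Perm (C × B) where
  toFun := prodCongrRight
  map_one' := rfl
  map_mul' _ _ := rfl

theorem exists_eq_mul_prodCongrRight_mul {A B : Type*} [Finite A] [Finite B]
    (σ : Perm (A × B)) :
    ∃ (f h : Perm (A × B)) (u : A → Perm B), (∀ y, (f y).2 = y.2) ∧ (∀ y, (h y).2 = y.2) ∧
      σ = f * prodCongrRight u * h := by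
  classical
  cases nonempty_fintype A
  cases nonempty_fintype B
  have hfib : ∀ b, #{x : A × B | x.2 = b} = Fintype.card A := fun b => by
    rw [show ({x : A × B | x.2 = b} : Finset _) = univ ×ˢ {b} by ext ⟨a, b'⟩; simp [eq_comm],
      card_product, card_singleton, mul_one, card_univ]
  have hfib_σ : ∀ b, #{x : A × B | (σ x).2 = b} = Fintype.card A := fun b => by
    rw [← hfib b]
    exact card_nbij' σ σ.symm (fun x hx => by simpa using hx) (fun y hy => by simpa using hy)
      (fun x _ => σ.symm_apply_apply x) (fun y _ => σ.apply_symm_apply y)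
  obtain ⟨c, hc, hcs, hcσ⟩ := exists_edgeColoring_of_regular hfib hfib_σ
  let col : A × B → A := fun x => (Fintype.equivFin A).symm ⟨c x, hc x (mem_univ x)⟩
  have bij : ∀ g : A × B → B, Set.InjOn (fun x => (c x, g x)) ↑(univ : Finset (A × B)) →
      Bijective fun x => (col x, g x) := fun g hg => by
    refine Finite.injective_iff_bijective.1 fun x y hxy => hg (mem_univ x) (mem_univ y) ?_
    obtain ⟨hcol, hgxy⟩ := Prod.mk.inj hxy
    exact Prod.ext (congrArg Fin.val ((Fintype.equivFin A).symm.injective hcol)) hgxy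
  let h := Equiv.ofBijective _ (bij _ hcs)
  let p := Equiv.ofBijective _ (bij _ hcσ)
  obtain ⟨u, hu⟩ := exists_prodCongrRight_eq (p * h⁻¹) fun y =>
    show (h (h.symm y)).1 = y.1 from congrArg Prod.fst (h.apply_symm_apply y)
  refine ⟨σ * p⁻¹, h, u, fun y =>
    show (p (p.symm y)).2 = y.2 from congrArg Prod.snd (p.apply_symm_apply y), fun _ => rfl, ?_⟩
  rw [hu]
  group

end Equiv.Perm

open Equiv Equiv.Perm

theorem List.exists_forall₂_prod_eq_pi {C M α : Type*} [Monoid M] {R : M → α → Prop}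
    (p : List α) {u : C → M} (h : ∀ c, ∃ l, Forall₂ R l p ∧ u c = l.prod) :
    ∃ L : List (C → M), Forall₂ (fun v a => ∀ c, R (v c) a) L p ∧ u = L.prod := by
  induction p generalizing u with
  | nil =>
    refine ⟨[], .nil, funext fun c => ?_⟩
    obtain ⟨l, hl, hu⟩ := h c
    rwa [forall₂_nil_right_iff.1 hl] at hu
  | cons a p ih =>
    choose l hl hu using h
    choose x l' hx hl' hl_eq using fun c => forall₂_cons_right_iff.1 (hl c)
    obtain ⟨L, hL, hu'⟩ := ih (u := fun c => (l' c).prod) fun c => ⟨l' c, hl' c, rfl⟩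
    refine ⟨x :: L, .cons hx hL, funext fun c => ?_⟩
    rw [hu c, hl_eq c, prod_cons, prod_cons, Pi.mul_apply, ← congrFun hu' c]

def IsOneDimensionalAlong {ι : Type*} {α : ι → Type*} (i : ι) (τ : Perm (∀ i, α i)) : Prop :=
  ∀ x j, j ≠ i → τ x j = x j

def zigzag : (d : ℕ) → List (Fin (d + 1))
  | 0 => [0]
  | d + 1 => 0 :: (zigzag d).map Fin.succ ++ [0]

lemma length_zigzag (d : ℕ) : (zigzag d).length = 2 * d + 1 := by
  induction d with
  | zero => rfl
  | succ d ih => simp [zigzag, ih]; omega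

section Box

variable {d : ℕ} {α : Fin (d + 1) → Type*}

lemma isOneDimensionalAlong_zero_permCongr {f : Perm (α 0 × ∀ i : Fin d, α i.succ)}
    (hf : ∀ y, (f y).2 = y.2) : IsOneDimensionalAlong 0 ((Fin.consEquiv α).permCongr f) := by
  intro x j hj
  obtain ⟨j, rfl⟩ := Fin.exists_succ_eq.2 hj
  simp [Fin.tail, hf]

lemma isOneDimensionalAlong_succ_permCongr_prodCongrRight {i : Fin d}
    {v : α 0 → Perm (∀ i : Fin d, α i.succ)} (hv : ∀ c, IsOneDimensionalAlong i (v c)) :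
    IsOneDimensionalAlong i.succ ((Fin.consEquiv α).permCongr (prodCongrRight v)) := by
  intro x j hj
  cases j using Fin.cases with
  | zero => simp
  | succ j => simp [Fin.tail, hv _ _ j fun h => hj (h ▸ rfl)]

end Box

theorem exists_forall₂_zigzag_prod_eq {d : ℕ} {α : Fin (d + 1) → Type*} [∀ i, Finite (α i)]
    (σ : Perm (∀ i, α i)) :
    ∃ l : List (Perm (∀ i, α i)),
      l.Forall₂ (fun τ i => IsOneDimensionalAlong i τ) (zigzag d) ∧ σ = l.prod := by
  induction d with
  | zero =>
    exact ⟨[σ], .cons (fun x j hj => absurd (Fin.eq_zero j) hj) .nil,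
      List.prod_singleton.symm⟩
  | succ d ih =>
    set e := Fin.consEquiv α
    obtain ⟨f, h, u, hf, hh, hσ⟩ := exists_eq_mul_prodCongrRight_mul (e.symm.permCongr σ)
    obtain ⟨L, hL, hu⟩ := (zigzag d).exists_forall₂_prod_eq_pi fun c => ih (u c)
    set Φ := e.permCongrHom.toMonoidHom.comp (prodCongrRightHom _ _)
    refine ⟨e.permCongr f :: L.map Φ ++ [e.permCongr h], ?_, ?_⟩
    · refine .cons (isOneDimensionalAlong_zero_permCongr hf) (List.rel_append ?_
        (.cons (isOneDimensionalAlong_zero_permCongr hh) .nil))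
      rw [List.forall₂_map_left_iff, List.forall₂_map_right_iff]
      exact hL.imp fun v i hv => isOneDimensionalAlong_succ_permCongr_prodCongrRight hv
    · calc σ = e.permCongrHom (f * prodCongrRight u * h) := by
            rw [← hσ, permCongrHom_coe, ← permCongr_symm, apply_symm_apply]
        _ = e.permCongr f * Φ L.prod * e.permCongr h := by rw [map_mul, map_mul, hu]; rfl
        _ = _ := by simp [map_list_prod, mul_assoc]

/-- Every permutation of a box can be written as a composition of 2d-1
one-dimensional permutations. -/
theorem box_permutation_decomposition (d : ℕ) (n : Fin d → ℕ)
    (σ : Equiv.Perm (∀ i, Fin (n i))) :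
    ∃ l : List (Equiv.Perm (∀ i, Fin (n i))),
      l.length = 2 * d - 1 ∧ (∀ τ ∈ l, IsOneDimensional τ) ∧ σ = l.prod := by
  cases d with
  | zero => exact ⟨[], rfl, by simp, Subsingleton.elim _ _⟩
  | succ d =>
    obtain ⟨l, hl, hσ⟩ := exists_forall₂_zigzag_prod_eq σ
    refine ⟨l, by rw [hl.length_eq, length_zigzag]; omega, fun τ hτ => ?_, hσ⟩
    exact ((List.forall₂_and_left (p := IsOneDimensional) _ _).1
      (hl.imp fun _ i hτ => ⟨⟨i, hτ⟩, hτ⟩)).1 τ hτ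
end

section
/- Let d ∈ ℕ and n₁,…,n_d ≥ 2, and let X := [n₁] × ⋯ × [n_d]. There exists a permutation σ : X → X such that any expression of σ as a composition of one-dimensional permutations requires at least 2d−1 factors. -/
open Equiv

theorem List.sum_count_eq_length {α : Type*} [Fintype α] [DecidableEq α] (l : List α) :
    ∑ a, l.count a = l.length := by
  simpa using Multiset.sum_count_eq_card (s := Finset.univ) (m := (l : Multiset α)) (by simp)

theorem List.two_mul_card_sub_one_le_length {α : Type*} [Fintype α] [DecidableEq α]
    {l : List α} (hmem : ∀ a, a ∈ l) (hsingle : ∀ a b, l.count a = 1 → l.count b = 1 → a = b) :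
    2 * Fintype.card α - 1 ≤ l.length := by
  have hsingles : (Finset.univ.filter fun a => l.count a = 1).card ≤ 1 :=
    Finset.card_le_one.mpr fun a ha b hb =>
      hsingle a b (Finset.mem_filter.1 ha).2 (Finset.mem_filter.1 hb).2
  have hle : ∀ a, 2 ≤ l.count a + if l.count a = 1 then 1 else 0 := by
    intro a
    have := List.count_pos_iff.mpr (hmem a)
    split_ifs <;> omega
  have hsum := Finset.sum_le_sum fun a (_ : a ∈ Finset.univ) => hle a
  rw [Finset.sum_add_distrib, Finset.sum_boole, l.sum_count_eq_length] at hsum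
  simp only [Finset.sum_const, Finset.card_univ, smul_eq_mul, Nat.cast_id] at hsum
  omega

theorem List.exists_eq_append_cons_of_count_map_eq_one {β α : Type*} [DecidableEq α]
    {l : List β} {c : β → α} {p : α} (h : (l.map c).count p = 1) :
    ∃ L₁ τ L₂, l = L₁ ++ τ :: L₂ ∧ c τ = p ∧ p ∉ L₁.map c ∧ p ∉ L₂.map c := by
  obtain ⟨τ, hτl, hτ⟩ := List.mem_map.1 (List.count_pos_iff.1 (h ▸ Nat.one_pos))
  obtain ⟨L₁, L₂, rfl⟩ := List.append_of_mem hτl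
  simp only [List.map_append, List.map_cons, List.count_append, List.count_cons, hτ,
    beq_self_eq_true, if_true] at h
  exact ⟨L₁, τ, L₂, rfl, hτ, List.count_eq_zero.1 (by omega), List.count_eq_zero.1 (by omega)⟩

-- `τ` is the later of the unique occurrences of `p` and `q`, and `m` the other one.
theorem List.exists_eq_append_cons_of_count_map_eq_one_of_ne {β α : Type*} [DecidableEq α]
    {l : List β} {c : β → α} {p q : α} (hpq : p ≠ q) (hp : (l.map c).count p = 1)
    (hq : (l.map c).count q = 1) :
    ∃ L₁ τ L₂ m, l = L₁ ++ τ :: L₂ ∧ m ≠ c τ ∧ c τ ∉ L₁.map c ∧ c τ ∉ L₂.map c ∧ m ∉ L₂.map c := by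
  obtain ⟨L₁, τ, L₂, rfl, rfl, hL₁, hL₂⟩ := List.exists_eq_append_cons_of_count_map_eq_one hp
  by_cases hqL₂ : q ∈ L₂.map c
  · simp only [List.map_append, List.map_cons, List.count_append, List.count_cons, beq_iff_eq,
      hpq, if_false] at hq
    have hq₂ := List.count_pos_iff.2 hqL₂
    have hqL₁ : q ∉ L₁.map c := List.count_eq_zero.1 (by omega)
    obtain ⟨K₁, υ, K₂, rfl, rfl, hK₁, hK₂⟩ :=
      List.exists_eq_append_cons_of_count_map_eq_one (l := L₂) (c := c) (p := q) (by omega)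
    refine ⟨L₁ ++ τ :: K₁, υ, K₂, c τ, by simp, hpq, ?_, hK₂, fun h => hL₂ (by simp [h])⟩
    simp [hqL₁, hK₁, Ne.symm hpq]
  · exact ⟨L₁, τ, L₂, q, rfl, hpq.symm, hL₁, hL₂, hqL₂⟩

theorem Equiv.Perm.apply_eq_of_forall_ne_apply_eq_self {α : Type*} {τ : Perm α} {x y : α}
    (hfix : ∀ z, z ≠ x → z ≠ y → τ z = z) (hx : τ x ≠ x) : τ x = y := by
  by_contra hy
  exact hx (τ.injective (hfix _ hx hy))

theorem Equiv.Perm.list_prod_apply_invariant {α β : Type*} (f : α → β) {l : List (Perm α)}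
    (h : ∀ ρ ∈ l, ∀ x, f (ρ x) = f x) (x : α) : f (l.prod x) = f x := by
  induction l with
  | nil => rfl
  | cons ρ l ih =>
    rw [List.prod_cons, Perm.mul_apply, h ρ List.mem_cons_self,
      ih fun τ hτ => h τ (List.mem_cons_of_mem _ hτ)]

section Box

variable {ι : Type*} {X : ι → Type*} [DecidableEq (∀ i, X i)]

theorem apply_eq_of_swap_eq_mul_mul {P Q τ : Perm (∀ i, X i)} {a b : ∀ i, X i} {j : ι}
    (h : swap a b = Q * τ * P) (hP : ∀ x, P x j = x j) (hQ : ∀ x, Q x j = x j)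
    (hτ : ∀ x k, k ≠ j → τ x k = x k) (hab : a j ≠ b j) : τ (P a) = P b := by
  have hswap : ∀ x, Q (τ (P x)) = swap a b x := by simp [h]
  have hτj : ∀ x, τ (P x) j = swap a b x j := fun x => by rw [← hQ (τ (P x)), hswap]
  refine Perm.apply_eq_of_forall_ne_apply_eq_self (fun z hza hzb => ?_) fun hPa => ?_
  · obtain ⟨w, rfl⟩ := P.surjective z
    funext k
    obtain rfl | hk := eq_or_ne k j
    · rw [hτj, swap_apply_of_ne_of_ne (by rintro rfl; exact hza rfl) (by rintro rfl; exact hzb rfl),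
        hP]
    · exact hτ _ k hk
  · exact hab (by rw [← hP a, ← hPa, hτj, swap_apply_left])

theorem eq_of_prod_append_cons_eq_swap {L₁ L₂ : List (Perm (∀ i, X i))} {τ : Perm (∀ i, X i)}
    {a b : ∀ i, X i} {j m : ι} (h : (L₁ ++ τ :: L₂).prod = swap a b)
    (hτ : ∀ x k, k ≠ j → τ x k = x k) (hL₁ : ∀ ρ ∈ L₁, ∀ x, ρ x j = x j)
    (hL₂ : ∀ ρ ∈ L₂, ∀ x, ρ x j = x j) (hL₂m : ∀ ρ ∈ L₂, ∀ x, ρ x m = x m) (hmj : m ≠ j)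
    (hab : a j ≠ b j) : a m = b m := by
  have hP := Perm.list_prod_apply_invariant (fun x : ∀ i, X i => x j) hL₂
  have hPm := Perm.list_prod_apply_invariant (fun x : ∀ i, X i => x m) hL₂m
  have key := apply_eq_of_swap_eq_mul_mul (Q := L₁.prod) (τ := τ) (P := L₂.prod)
    (by rw [← h, List.prod_append, List.prod_cons, mul_assoc]) hP
    (Perm.list_prod_apply_invariant (fun x : ∀ i, X i => x j) hL₁) hτ hab
  calc a m = L₂.prod a m := (hPm a).symm
    _ = τ (L₂.prod a) m := (hτ _ m hmj).symm
    _ = b m := by rw [key, hPm]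

theorem two_mul_card_sub_one_le_length_of_prod_eq_swap [Fintype ι] [DecidableEq ι]
    {l : List (Perm (∀ i, X i))} (hl : ∀ τ ∈ l, ∃ i, ∀ x j, j ≠ i → τ x j = x j)
    {a b : ∀ i, X i} (hab : ∀ i, a i ≠ b i) (hprod : l.prod = swap a b) :
    2 * Fintype.card ι - 1 ≤ l.length := by
  cases isEmpty_or_nonempty ι
  · simp
  choose! c hc using hl
  have hfix : ∀ {L}, L ⊆ l → ∀ j, j ∉ L.map c → ∀ ρ ∈ L, ∀ x, ρ x j = x j :=
    fun hL j hj ρ hρ x => hc ρ (hL hρ) x j fun h => hj (h ▸ List.mem_map_of_mem hρ)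
  rw [← l.length_map c]
  refine List.two_mul_card_sub_one_le_length (fun i => ?_) fun p q hp hq => ?_
  · by_contra hi
    have hai := Perm.list_prod_apply_invariant (fun x : ∀ i, X i => x i)
      (hfix (List.Subset.refl l) i hi) a
    rw [hprod, swap_apply_left] at hai
    exact hab i hai.symm
  · by_contra hpq
    obtain ⟨L₁, τ, L₂, m, rfl, hm, hL₁, hL₂, hL₂m⟩ :=
      List.exists_eq_append_cons_of_count_map_eq_one_of_ne hpq hp hq
    exact hab m <| eq_of_prod_append_cons_eq_swap hprod (hc τ (by simp))
      (hfix (by simp) _ hL₁) (hfix (by simp) _ hL₂) (hfix (by simp) _ hL₂m) hm (hab _)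

end Box

/-- If all sides of the box are at least 2, there is a permutation requiring at least
2d-1 one-dimensional factors in any decomposition. -/
theorem box_permutation_decomposition_lower_bound (d : ℕ) (n : Fin d → ℕ)
    (hn : ∀ i, 2 ≤ n i) :
    ∃ σ : Equiv.Perm (∀ i, Fin (n i)),
      ∀ l : List (Equiv.Perm (∀ i, Fin (n i))),
        (∀ τ ∈ l, IsOneDimensional τ) → σ = l.prod → 2 * d - 1 ≤ l.length := by
  let a : ∀ i, Fin (n i) := fun i => ⟨0, by linarith [hn i]⟩
  let b : ∀ i, Fin (n i) := fun i => ⟨1, by linarith [hn i]⟩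
  refine ⟨swap a b, fun l hl hσ => ?_⟩
  simpa using two_mul_card_sub_one_le_length_of_prod_eq_swap hl
    (fun i => by simp [a, b, Fin.ext_iff]) hσ.symm
end

section
/- Let X = [m] × [n]. Every permutation σ : X → X can be written as σ = σ₂ ∘ σ₁ ∘ σ₂′, where σ₂ and σ₂′ are permutations affecting only the second coordinate and σ₁ is a permutation affecting only the first coordinate. -/
/-!
Regard the points `x` of `[m] × [n]` as the edges of a bipartite multigraph joining the row `x.1`
on the left to the row `(σ x).1` on the right. Every vertex has degree `n`, so by Hall's theorem
the graph has a perfect matching; removing it leaves an `(n - 1)`-regular graph, and induction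
splits the edges into `n` perfect matchings, i.e. gives a colouring `c : [m] × [n] → [n]` for which
`x ↦ (x.1, c x)` and `x ↦ ((σ x).1, c x)` are bijections `τ` and `ρ`. Then `τ` and `σ ρ⁻¹` only
move second coordinates, `ρ τ⁻¹` only moves first coordinates, and `σ = (σ ρ⁻¹) (ρ τ⁻¹) τ`.
-/

open Finset Function

section

variable {ε α β : Type*} [DecidableEq α]

def IsFiberRegular (F : Finset ε) (u : ε → α) (r : ℕ) : Prop :=
  ∀ a, #{e ∈ F | u e = a} = r

theorem isFiberRegular_univ_fst [Fintype α] [Fintype β] :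
    IsFiberRegular (univ : Finset (α × β)) Prod.fst (Fintype.card β) := by
  intro a
  have : ({x | x.1 = a} : Finset (α × β)) = {a} ×ˢ univ := by
    ext x
    simp only [mem_filter, mem_univ, true_and, mem_product, mem_singleton, and_true]
  simp [this]

namespace IsFiberRegular

variable {F M : Finset ε} {u : ε → α} {v : ε → β} {r : ℕ}

theorem comp_perm [Fintype ε] (hu : IsFiberRegular univ u r) (σ : Equiv.Perm ε) :
    IsFiberRegular univ (u ∘ σ) r := fun a =>
  hu a ▸ card_equiv σ (by simp)

theorem card_eq [Fintype α] (hu : IsFiberRegular F u r) : #F = Fintype.card α * r := by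
  rw [card_eq_sum_card_fiberwise (t := univ) (fun e _ => mem_coe.mpr (mem_univ (u e))),
    sum_const_nat fun a _ => hu a, card_univ]

theorem injOn (hM : IsFiberRegular M u 1) : Set.InjOn u M := by
  intro e he e' he' h
  obtain ⟨x, hx⟩ := card_eq_one.mp (hM (u e))
  have he : e ∈ ({x} : Finset ε) := hx ▸ mem_filter.mpr ⟨he, rfl⟩
  have he' : e' ∈ ({x} : Finset ε) := hx ▸ mem_filter.mpr ⟨he', h.symm⟩
  rw [mem_singleton] at he he'
  rw [he, he']

theorem sdiff [DecidableEq ε] (hu : IsFiberRegular F u (r + 1)) (hMF : M ⊆ F)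
    (hM : IsFiberRegular M u 1) : IsFiberRegular (F \ M) u r := by
  intro a
  have hsplit : {e ∈ F \ M | u e = a} = {e ∈ F | u e = a} \ {e ∈ M | u e = a} := by
    ext e
    simp only [mem_filter, mem_sdiff]
    tauto
  rw [hsplit, card_sdiff_of_subset (filter_subset_filter _ hMF), hu a, hM a, Nat.add_sub_cancel]

theorem of_bijective_comp [Fintype β] [DecidableEq ε] {g : β → ε} (hg : Bijective (u ∘ g)) :
    IsFiberRegular (univ.image g) u 1 := by
  intro a
  obtain ⟨b, rfl⟩ := hg.2 a
  refine card_eq_one.mpr ⟨g b, ?_⟩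
  ext e
  simp only [mem_filter, mem_image, mem_univ, true_and, mem_singleton]
  constructor
  · rintro ⟨⟨b', rfl⟩, h⟩
    rw [hg.1 h]
  · rintro rfl
    exact ⟨⟨b, rfl⟩, rfl⟩

theorem card_le_card_biUnion [DecidableEq β] (hu : IsFiberRegular F u r)
    (hv : ∀ b, #{e ∈ F | v e = b} ≤ r) (hr : 0 < r) (s : Finset α) :
    #s ≤ #(s.biUnion fun a => {e ∈ F | u e = a}.image v) := by
  have hcount : #{e ∈ F | u e ∈ s} = #s * r := by
    rw [card_eq_sum_card_fiberwise (s := {e ∈ F | u e ∈ s}) (t := s)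
      fun e he => (mem_filter.mp he).2, sum_const_nat fun a ha => ?_]
    rw [filter_filter, ← hu a]
    exact congrArg card (filter_congr fun e _ => ⟨And.right, fun h => ⟨h ▸ ha, h⟩⟩)
  have himage : {e ∈ F | u e ∈ s}.image v ⊆ s.biUnion fun a => {e ∈ F | u e = a}.image v := by
    intro b hb
    obtain ⟨e, he, rfl⟩ := mem_image.mp hb
    rw [mem_filter] at he
    exact mem_biUnion.mpr ⟨u e, he.2, mem_image_of_mem v (mem_filter.mpr ⟨he.1, rfl⟩)⟩
  refine Nat.le_of_mul_le_mul_right ?_ hr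
  calc #s * r = #{e ∈ F | u e ∈ s} := hcount.symm
    _ ≤ r * #({e ∈ F | u e ∈ s}.image v) :=
      card_le_mul_card_image _ r fun b _ =>
        (card_le_card (filter_subset_filter _ (filter_subset _ F))).trans (hv b)
    _ ≤ r * #(s.biUnion fun a => {e ∈ F | u e = a}.image v) :=
      Nat.mul_le_mul_left r (card_le_card himage)
    _ = _ := Nat.mul_comm _ _

theorem exists_perfectMatching [Fintype α] [Fintype β] [DecidableEq β] [DecidableEq ε]
    (hu : IsFiberRegular F u r) (hv : IsFiberRegular F v r) (hr : 0 < r) :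
    ∃ M ⊆ F, IsFiberRegular M u 1 ∧ IsFiberRegular M v 1 := by
  obtain ⟨h, hinj, hmem⟩ := (all_card_le_biUnion_card_iff_exists_injective _).mp
    (hu.card_le_card_biUnion (fun b => (hv b).le) hr)
  have hedge : ∀ a, ∃ e, e ∈ F ∧ u e = a ∧ v e = h a := fun a => by
    simpa only [mem_image, mem_filter, and_assoc] using hmem a
  choose g hgF hgu hgv using hedge
  have hcard : Fintype.card α = Fintype.card β :=
    Nat.eq_of_mul_eq_mul_right hr (hu.card_eq.symm.trans hv.card_eq)
  have hvg : Bijective (v ∘ g) := by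
    rw [show v ∘ g = h from funext hgv]
    exact (Fintype.bijective_iff_injective_and_card h).mpr ⟨hinj, hcard⟩
  have hug : Bijective (u ∘ g) := by
    rw [show u ∘ g = id from funext hgu]
    exact bijective_id
  refine ⟨univ.image g, ?_, of_bijective_comp hug, of_bijective_comp hvg⟩
  simpa only [image_subset_iff, mem_univ, true_implies] using hgF

theorem injOn_ite [DecidableEq ε] {c : ε → ℕ} (hM : IsFiberRegular M u 1)
    (hc : ∀ e ∈ F \ M, c e < r) (hcu : Set.InjOn (fun e => (u e, c e)) ↑(F \ M)) :
    Set.InjOn (fun e => (u e, if e ∈ M then r else c e)) F := by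
  intro e he e' he' h
  simp only [Prod.mk.injEq] at h
  obtain ⟨hu, hc'⟩ := h
  by_cases heM : e ∈ M <;> by_cases he'M : e' ∈ M <;>
    simp only [heM, he'M, if_true, if_false] at hc'
  · exact hM.injOn heM he'M hu
  · exact absurd (hc e' (mem_sdiff.mpr ⟨he', he'M⟩)) (by omega)
  · exact absurd (hc e (mem_sdiff.mpr ⟨he, heM⟩)) (by omega)
  · exact hcu (mem_sdiff.mpr ⟨he, heM⟩) (mem_sdiff.mpr ⟨he', he'M⟩) (Prod.ext hu hc')

/-- Colours are natural numbers `< r` rather than elements of `Fin r`, so that the case `r = 0`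
(where `F = ∅` but `ε` may be inhabited) goes through. -/
theorem exists_edgeColoring_lt [Fintype α] [Fintype β] [DecidableEq β] [DecidableEq ε]
    (hu : IsFiberRegular F u r) (hv : IsFiberRegular F v r) :
    ∃ c : ε → ℕ, (∀ e ∈ F, c e < r) ∧
      Set.InjOn (fun e => (u e, c e)) F ∧ Set.InjOn (fun e => (v e, c e)) F := by
  induction r generalizing F with
  | zero =>
    have hF : F = ∅ := eq_empty_of_forall_notMem fun e he =>
      eq_empty_iff_forall_notMem.mp (card_eq_zero.mp (hu (u e))) e (mem_filter.mpr ⟨he, rfl⟩)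
    subst hF
    exact ⟨0, by simp, by simp, by simp⟩
  | succ r ih =>
    obtain ⟨M, hMF, hMu, hMv⟩ := exists_perfectMatching hu hv r.succ_pos
    obtain ⟨c, hc, hcu, hcv⟩ := ih (hu.sdiff hMF hMu) (hv.sdiff hMF hMv)
    refine ⟨fun e => if e ∈ M then r else c e, fun e he => ?_, injOn_ite hMu hc hcu,
      injOn_ite hMv hc hcv⟩
    show (if e ∈ M then r else c e) < r + 1
    split_ifs with heM
    · exact r.lt_succ_self
    · exact (hc e (mem_sdiff.mpr ⟨he, heM⟩)).trans r.lt_succ_self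

theorem exists_edgeColoring [Fintype ε] [Fintype α] [Fintype β] [DecidableEq β] [DecidableEq ε]
    (hu : IsFiberRegular univ u r) (hv : IsFiberRegular univ v r) :
    ∃ c : ε → Fin r, Injective (fun e => (u e, c e)) ∧ Injective (fun e => (v e, c e)) := by
  obtain ⟨c, hc, hcu, hcv⟩ := exists_edgeColoring_lt hu hv
  refine ⟨fun e => ⟨c e, hc e (mem_univ e)⟩, fun e e' h => ?_, fun e e' h => ?_⟩
  · exact hcu (by simp) (by simp) (by simpa [Fin.ext_iff] using h)
  · exact hcv (by simp) (by simp) (by simpa [Fin.ext_iff] using h)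

end IsFiberRegular

end

/-- Every permutation of [m] × [n] is a composition σ₂ ∘ σ₁ ∘ σ₂' where σ₂, σ₂'
affect only the second coordinate and σ₁ affects only the first coordinate. -/
theorem two_dim_box_decomposition (m n : ℕ) (σ : Equiv.Perm (Fin m × Fin n)) :
    ∃ σ₂ σ₁ σ₂' : Equiv.Perm (Fin m × Fin n),
      (∀ x, (σ₂ x).1 = x.1) ∧ (∀ x, (σ₁ x).2 = x.2) ∧ (∀ x, (σ₂' x).1 = x.1) ∧
      σ = σ₂ * σ₁ * σ₂' := by
  have hfst : IsFiberRegular (univ : Finset (Fin m × Fin n)) Prod.fst n := by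
    simpa using isFiberRegular_univ_fst (α := Fin m) (β := Fin n)
  obtain ⟨c, hτ, hρ⟩ := hfst.exists_edgeColoring (hfst.comp_perm σ)
  let τ := Equiv.ofBijective _ (Finite.injective_iff_bijective.mp hτ)
  let ρ := Equiv.ofBijective _ (Finite.injective_iff_bijective.mp hρ)
  refine ⟨σ * ρ⁻¹, ρ * τ⁻¹, τ, fun x => ?_, fun x => ?_, fun x => rfl, ?_⟩
  · show (ρ (ρ.symm x)).1 = x.1
    rw [ρ.apply_symm_apply]
  · show (τ (τ.symm x)).2 = x.2
    rw [τ.apply_symm_apply]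
  · group
end

section
/- Let L be a finite set of labels with |L| = m, and let A be an m × n matrix with entries in L such that each label ℓ ∈ L appears in exactly n entries of A. Then there exist permutations σ₁,…,σ_m ∈ S_n such that the matrix à defined by Ã_{ij} = A_{i,σ_i(j)} has the property that every column of à contains all m distinct labels. -/
/-!
Think of the matrix as a bipartite multigraph joining each row to the labels of its entries.
If every label occurs `n` times, this multigraph is `n`-regular (counting entries also forces
as many rows as labels), so Hall's condition holds and there is a perfect matching: a choice of
one entry per row whose labels are all distinct. Moving that entry to column `0` of each row
leaves an `(n - 1)`-regular matrix on the remaining columns, and induction on `n` finishes.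
-/

open Finset Function

section
variable {ι κ L : Type*} [Fintype ι] [Fintype κ] [DecidableEq L]

def labelCount (A : ι → κ → L) (ℓ : L) : ℕ := #{p : ι × κ | A p.1 p.2 = ℓ}

theorem sum_labelCount_eq_card_filter_mem (A : ι → κ → L) (S : Finset L) :
    ∑ ℓ ∈ S, labelCount A ℓ = #{p : ι × κ | A p.1 p.2 ∈ S} := by
  rw [card_eq_sum_card_fiberwise (s := {p : ι × κ | A p.1 p.2 ∈ S}) (t := S)
    (f := fun p => A p.1 p.2) fun p hp => by simpa using hp]
  refine sum_congr rfl fun ℓ hℓ => ?_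
  rw [labelCount, filter_filter]
  exact congrArg card (filter_congr fun p _ => ⟨fun h => ⟨h ▸ hℓ, h⟩, And.right⟩)

theorem labelCount_eq_sum (A : ι → κ → L) (ℓ : L) :
    labelCount A ℓ = ∑ i, ∑ j, if A i j = ℓ then 1 else 0 := by
  rw [labelCount, card_filter, Fintype.sum_prod_type]

variable {A : ι → κ → L}

theorem exists_injective_row_of_labelCount_eq [Nonempty κ]
    (hA : ∀ ℓ, labelCount A ℓ = Fintype.card κ) :
    ∃ f : L → ι, Injective f ∧ ∀ ℓ, ∃ j, A (f ℓ) j = ℓ := by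
  classical
  let rows : L → Finset ι := fun ℓ => {i | ∃ j, A i j = ℓ}
  have hall : ∀ S : Finset L, #S ≤ #(S.biUnion rows) := fun S => by
    have hsub : ({p | A p.1 p.2 ∈ S} : Finset (ι × κ)) ⊆ S.biUnion rows ×ˢ univ :=
      fun p hp => by
        simp only [mem_filter, mem_univ, true_and] at hp
        simpa [rows] using ⟨p.2, hp⟩
    have := card_le_card hsub
    rw [← sum_labelCount_eq_card_filter_mem, sum_congr rfl fun ℓ _ => hA ℓ, sum_const,
      smul_eq_mul, card_product, card_univ] at this
    exact Nat.le_of_mul_le_mul_right this Fintype.card_pos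
  obtain ⟨f, hf, hrows⟩ := (all_card_le_biUnion_card_iff_exists_injective rows).1 hall
  exact ⟨f, hf, fun ℓ => by simpa [rows] using hrows ℓ⟩

variable [Fintype L]

theorem card_mul_eq_of_labelCount_eq (hA : ∀ ℓ, labelCount A ℓ = Fintype.card κ) :
    Fintype.card ι * Fintype.card κ = Fintype.card L * Fintype.card κ := by
  have := sum_labelCount_eq_card_filter_mem A univ
  simp only [hA, sum_const, card_univ, smul_eq_mul, mem_univ, filter_true] at this
  rw [this, Fintype.card_prod]

theorem exists_bijective_transversal [Nonempty κ]
    (hA : ∀ ℓ, labelCount A ℓ = Fintype.card κ) :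
    ∃ c : ι → κ, Bijective fun i => A i (c i) := by
  obtain ⟨f, hf, hrows⟩ := exists_injective_row_of_labelCount_eq hA
  have hcard : Fintype.card L = Fintype.card ι :=
    (Nat.eq_of_mul_eq_mul_right Fintype.card_pos (card_mul_eq_of_labelCount_eq hA)).symm
  let e : L ≃ ι :=
    Equiv.ofBijective f ((Fintype.bijective_iff_injective_and_card f).2 ⟨hf, hcard⟩)
  have hc : ∀ i, ∃ j, A i j = e.symm i := fun i => by
    simpa only [e, Equiv.ofBijective_apply_symm_apply] using hrows (e.symm i)
  choose c hc using hc
  exact ⟨c, by simpa only [hc] using e.symm.bijective⟩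

theorem labelCount_eq_labelCount_swap_succ_add_one {n : ℕ} {A : ι → Fin (n + 1) → L}
    {c : ι → Fin (n + 1)} (hc : Bijective fun i => A i (c i)) (ℓ : L) :
    labelCount A ℓ =
      labelCount (fun i (j : Fin n) => A i (Equiv.swap 0 (c i) j.succ)) ℓ + 1 := by
  have hrow : ∀ i, (∑ j, if A i j = ℓ then 1 else 0) =
      (if A i (c i) = ℓ then 1 else 0) +
        ∑ j : Fin n, if A i (Equiv.swap 0 (c i) j.succ) = ℓ then 1 else 0 := fun i => by
    rw [← Equiv.sum_comp (Equiv.swap 0 (c i)), Fin.sum_univ_succ, Equiv.swap_apply_left]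
  have hdiag : (∑ i, if A i (c i) = ℓ then 1 else 0) = 1 := by
    rw [Fintype.sum_bijective _ hc _ (fun ℓ' => if ℓ' = ℓ then 1 else 0) fun _ => rfl]
    simp
  rw [labelCount_eq_sum, labelCount_eq_sum, sum_congr rfl fun i _ => hrow i, sum_add_distrib, hdiag,
    add_comm]

theorem exists_perm_forall_exists_eq_of_labelCount_eq {n : ℕ} (A : ι → Fin n → L)
    (hA : ∀ ℓ, labelCount A ℓ = n) :
    ∃ σ : ι → Equiv.Perm (Fin n), ∀ j ℓ, ∃ i, A i (σ i j) = ℓ := by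
  induction n with
  | zero => exact ⟨fun _ => 1, fun j => j.elim0⟩
  | succ n ih =>
    obtain ⟨c, hc⟩ := exists_bijective_transversal (A := A) (by simpa using hA)
    obtain ⟨τ, hτ⟩ := ih (fun i j => A i (Equiv.swap 0 (c i) j.succ)) fun ℓ => by
      have := labelCount_eq_labelCount_swap_succ_add_one hc ℓ
      have := hA ℓ
      omega
    refine ⟨fun i => Equiv.Perm.decomposeFin.symm (c i, τ i), fun j ℓ => ?_⟩
    induction j using Fin.cases with
    | zero => simpa using hc.2 ℓ
    | succ j => simpa using hτ j ℓ

end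

theorem well_dispersed_general {L : Type*} [Fintype L] [DecidableEq L] (m n : ℕ)
    (A : Fin m → Fin n → L)
    (hA : ∀ ℓ : L,
      (Finset.univ.filter fun p : Fin m × Fin n => A p.1 p.2 = ℓ).card = n) :
    ∃ σ : Fin m → Equiv.Perm (Fin n),
      ∀ (j : Fin n) (ℓ : L), ∃ i : Fin m, A i (σ i j) = ℓ :=
  exists_perm_forall_exists_eq_of_labelCount_eq A hA

/-- Well-dispersed lemma: if an m × n matrix over a label set of size m contains each
label in exactly n entries, then the entries of each row may be permuted so that every
column contains all m labels. -/
theorem well_dispersed {L : Type*} [Fintype L] [DecidableEq L] (m n : ℕ)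
    (hL : Fintype.card L = m) (A : Fin m → Fin n → L)
    (hA : ∀ ℓ : L,
      (Finset.univ.filter fun p : Fin m × Fin n => A p.1 p.2 = ℓ).card = n) :
    ∃ σ : Fin m → Equiv.Perm (Fin n),
      ∀ (j : Fin n) (ℓ : L), ∃ i : Fin m, A i (σ i j) = ℓ :=
  well_dispersed_general m n A hA
end

section
/- The swap permutation σ on X = [n₁] × ⋯ × [n_d] (with all nᵢ ≥ 2) that exchanges (1,…,1) and (2,…,2) and fixes all other points cannot be written as a composition of fewer than 2d−1 one-dimensional permutations. -/
/-!
Suppose `swap a b = τ₀ * ⋯ * τₘ₋₁` with every `τₖ` moving a single coordinate. Since `swap a b`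
changes every coordinate of `a`, every coordinate is moved by some factor, so if `m < 2d - 1` at least two coordinates `i ≠ j` are moved by
exactly one factor each, and we may take the factor `τ` of `i` to come after that of `j`. This
writes `swap a b = A * τ * B`, where `A` preserves coordinate `i` and `B` preserves both `i` and
`j`. Conjugating by `B`, `swap (B a) (B b) = C * τ` with `C` preserving coordinate `i`. Off
`{B a, B b}` this forces `τ x = C⁻¹ x`, which agrees with `x` in coordinate `i` and hence
everywhere, while `τ (B a)` has the `i`-th coordinate of `B b`. So `τ` fixes every point but
`B a` and `B b` and moves `B a`, hence `τ (B a) = B b`; but `τ` preserves coordinate `j`, in which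
`B a` and `B b` differ.
-/

namespace List

variable {ι : Type*} [DecidableEq ι]

theorem exists_ne_count_eq_one [Fintype ι] {ds : List ι} (hmem : ∀ i, i ∈ ds)
    (hlen : ds.length < 2 * Fintype.card ι - 1) :
    ∃ i j, i ≠ j ∧ ds.count i = 1 ∧ ds.count j = 1 := by
  set S := Finset.univ.filter fun i => ds.count i = 1
  have hsum : ∑ i, ds.count i = ds.length := by
    rw [← sum_toFinset_count_eq_length]
    congr
    ext i
    simp [hmem]
  have hpoint : ∀ i, 2 ≤ ds.count i + if ds.count i = 1 then 1 else 0 := fun i => by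
    have := count_pos_iff.mpr (hmem i)
    split_ifs <;> omega
  have hcard : 2 * Fintype.card ι ≤ ds.length + S.card :=
    calc 2 * Fintype.card ι = ∑ _i : ι, 2 := by simp [mul_comm]
      _ ≤ ∑ i, (ds.count i + if ds.count i = 1 then 1 else 0) :=
        Finset.sum_le_sum fun i _ => hpoint i
      _ = ds.length + S.card := by rw [Finset.sum_add_distrib, hsum, Finset.card_filter]
  obtain ⟨i, hi, j, hj, hij⟩ := Finset.one_lt_card.mp (by omega : 1 < S.card)
  exact ⟨i, j, hij, (Finset.mem_filter.mp hi).2, (Finset.mem_filter.mp hj).2⟩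

theorem notMem_of_count_append_cons_eq_one {L₁ L₂ : List ι} {k : ι}
    (h : (L₁ ++ k :: L₂).count k = 1) : k ∉ L₁ ∧ k ∉ L₂ := by
  simp only [count_append, count_cons_self] at h
  exact ⟨count_eq_zero.mp (by omega), count_eq_zero.mp (by omega)⟩

theorem exists_eq_append_cons_of_length_lt [Fintype ι] {ds : List ι} (hmem : ∀ i, i ∈ ds)
    (hlen : ds.length < 2 * Fintype.card ι - 1) :
    ∃ L₁ i L₂ j, ds = L₁ ++ i :: L₂ ∧ i ∉ L₁ ∧ i ∉ L₂ ∧ j ≠ i ∧ j ∉ L₂ := by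
  obtain ⟨i, j, hij, hi, hj⟩ := exists_ne_count_eq_one hmem hlen
  obtain ⟨L₁, L₂, rfl⟩ := append_of_mem (hmem i)
  obtain ⟨hi₁, hi₂⟩ := notMem_of_count_append_cons_eq_one hi
  by_cases hj₂ : j ∈ L₂
  · obtain ⟨M₁, M₂, rfl⟩ := append_of_mem hj₂
    have hds : L₁ ++ i :: (M₁ ++ j :: M₂) = (L₁ ++ i :: M₁) ++ j :: M₂ := by simp
    rw [hds] at hj ⊢
    obtain ⟨hj₁, hj₂⟩ := notMem_of_count_append_cons_eq_one hj
    exact ⟨_, j, M₂, i, rfl, hj₁, hj₂, hij, fun h => hi₂ (by simp [h])⟩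
  · exact ⟨L₁, i, L₂, j, rfl, hi₁, hi₂, hij.symm, hj₂⟩

end List

section CoordStabilizer

variable {ι : Type*} {α : ι → Type*}

def coordStabilizer (c : ι) : Subgroup (Equiv.Perm (∀ i, α i)) where
  carrier := {σ | ∀ x, σ x c = x c}
  mul_mem' hσ hτ x := (hσ _).trans (hτ x)
  one_mem' _ := rfl
  inv_mem' {σ} hσ x := by simpa using (hσ (σ⁻¹ x)).symm

variable [DecidableEq (∀ i, α i)] {a b : ∀ i, α i} {i j : ι}

theorem swap_ne_mul_of_mem_coordStabilizer (hji : j ≠ i) (hai : a i ≠ b i) (haj : a j ≠ b j)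
    {C τ : Equiv.Perm (∀ i, α i)} (hC : C ∈ coordStabilizer i)
    (hτ : ∀ c, c ≠ i → τ ∈ coordStabilizer c) : Equiv.swap a b ≠ C * τ := by
  intro h
  have hτ_eq : ∀ x, τ x = C⁻¹ (Equiv.swap a b x) := fun x => by simp [h]
  have hτ_fix : ∀ x, x ≠ a → x ≠ b → τ x = x := fun x hxa hxb => funext fun c => by
    by_cases hc : c = i
    · subst hc
      rw [hτ_eq, Equiv.swap_apply_of_ne_of_ne hxa hxb]
      exact inv_mem hC x
    · exact hτ c hc x
  have hτa_i : τ a i = b i := by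
    rw [hτ_eq, Equiv.swap_apply_left]
    exact inv_mem hC b
  have hτa : τ a = b := by
    by_contra hne
    have hmoved : τ a ≠ a := fun h' => hai (by rw [← hτa_i, h'])
    exact hmoved (τ.injective (hτ_fix _ hmoved hne))
  exact haj (hτa ▸ hτ j hji a).symm

theorem swap_ne_mul_mul_of_mem_coordStabilizer (hji : j ≠ i) (hai : a i ≠ b i)
    (haj : a j ≠ b j) {A τ B : Equiv.Perm (∀ i, α i)} (hA : A ∈ coordStabilizer i)
    (hτ : ∀ c, c ≠ i → τ ∈ coordStabilizer c) (hBi : B ∈ coordStabilizer i)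
    (hBj : B ∈ coordStabilizer j) : Equiv.swap a b ≠ A * τ * B := by
  intro h
  refine swap_ne_mul_of_mem_coordStabilizer (a := B a) (b := B b) hji
    (by rwa [hBi a, hBi b]) (by rwa [hBj a, hBj b]) (mul_mem hBi hA) hτ ?_
  rw [Equiv.swap_apply_apply, h]
  group

end CoordStabilizer

theorem swap_needs_many_one_dim_general (d : ℕ) (n : Fin d → ℕ)
    (a b : ∀ i, Fin (n i)) (ha : ∀ i, (a i).val = 0) (hb : ∀ i, (b i).val = 1)
    (l : List (Equiv.Perm (∀ i, Fin (n i))))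
    (hl : ∀ τ ∈ l, IsOneDimensional τ) (hprod : Equiv.swap a b = l.prod) :
    2 * d - 1 ≤ l.length := by
  by_contra! hlen
  have hab : ∀ c, a c ≠ b c := fun c h => by simpa [ha, hb] using congrArg Fin.val h
  have : Nonempty (Fin d) := ⟨⟨0, by omega⟩⟩
  let dir (τ : Equiv.Perm (∀ i, Fin (n i))) : Fin d :=
    Classical.epsilon fun i => ∀ x, ∀ j, j ≠ i → τ x j = x j
  have hdir : ∀ τ ∈ l, ∀ c, c ≠ dir τ → τ ∈ coordStabilizer c :=
    fun τ hτ c hc x => Classical.epsilon_spec (hl τ hτ) x c hc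
  have hprod_mem : ∀ L ⊆ l, ∀ c, (∀ τ ∈ L, dir τ ≠ c) → L.prod ∈ coordStabilizer c :=
    fun L hL c hc => Subgroup.list_prod_mem _ fun τ hτ => hdir τ (hL hτ) c (hc τ hτ).symm
  have hmem : ∀ c, c ∈ l.map dir := fun c => by
    by_contra hc
    have hfix := hprod_mem l (List.Subset.refl l) c (by simpa using hc) a
    rw [← hprod, Equiv.swap_apply_left] at hfix
    exact hab c hfix.symm
  obtain ⟨D₁, i, D₂, j, hds, hi₁, hi₂, hji, hj₂⟩ :=
    List.exists_eq_append_cons_of_length_lt hmem (by simpa using hlen)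
  obtain ⟨L₁, L, rfl, rfl, hL⟩ := List.map_eq_append_iff.mp hds
  obtain ⟨τ, L₂, rfl, rfl, rfl⟩ := List.map_eq_cons_iff.mp hL
  refine swap_ne_mul_mul_of_mem_coordStabilizer hji (hab _) (hab j)
    (hprod_mem L₁ (by simp) _ (by simpa using hi₁)) (hdir τ (by simp))
    (hprod_mem L₂ (by simp) _ (by simpa using hi₂))
    (hprod_mem L₂ (by simp) j (by simpa using hj₂)) ?_
  rw [hprod, List.prod_append, List.prod_cons, mul_assoc]

/-- The permutation swapping (1,…,1) and (2,…,2) (the points with all coordinates 0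
resp. all coordinates 1 in 0-indexed notation) in a box with all sides at least 2
cannot be written as a composition of fewer than 2d-1 one-dimensional permutations. -/
theorem swap_needs_many_one_dim (d : ℕ) (n : Fin d → ℕ) (hn : ∀ i, 2 ≤ n i)
    (a b : ∀ i, Fin (n i)) (ha : ∀ i, (a i).val = 0) (hb : ∀ i, (b i).val = 1)
    (l : List (Equiv.Perm (∀ i, Fin (n i))))
    (hl : ∀ τ ∈ l, IsOneDimensional τ) (hprod : Equiv.swap a b = l.prod) :
    2 * d - 1 ≤ l.length :=
  swap_needs_many_one_dim_general d n a b ha hb l hl hprod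
end

section
/- Let H and G be graphs. If H is a minor of G, then there exists a combinatorial embedding of H into G. -/
open SimpleGraph

/-- `H` is a minor of `G`: there is a model of `H` in `G`, i.e. a family of nonempty,
pairwise-disjoint connected branch sets in `G` indexed by the vertices of `H`, with
adjacent vertices of `H` having branch sets joined by an edge of `G`. -/
def SimpleGraph.IsMinorOf {V W : Type*} (H : SimpleGraph V) (G : SimpleGraph W) : Prop :=
  ∃ μ : V → Set W,
    (∀ a, (G.induce (μ a)).Connected) ∧
    (Pairwise fun a b => Disjoint (μ a) (μ b)) ∧
    ∀ ⦃a b⦄, H.Adj a b → ∃ x ∈ μ a, ∃ y ∈ μ b, G.Adj x y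

/-- A combinatorial embedding of `H` into `G`: vertices map injectively to vertices,
each edge maps to a walk (road) between the images of its endpoints, roads of
non-adjacent edges are vertex-disjoint, and the image of a vertex not lying on an
edge avoids the road of that edge. -/
structure CombEmbedding {V W : Type*} (H : SimpleGraph V) (G : SimpleGraph W) where
  vmap : V → W
  inj : Function.Injective vmap
  road : ∀ ⦃a b⦄, H.Adj a b → G.Walk (vmap a) (vmap b)
  disj : ∀ ⦃a b c d⦄ (h₁ : H.Adj a b) (h₂ : H.Adj c d),
    a ≠ c → a ≠ d → b ≠ c → b ≠ d →
    ∀ x, x ∈ (road h₁).support → x ∉ (road h₂).support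
  iso : ∀ ⦃a b⦄ (h : H.Adj a b) (w : V), w ≠ a → w ≠ b → vmap w ∉ (road h).support

/-- Cartesian (box) product of a family of graphs: two functions are adjacent iff they
differ in exactly one coordinate, where they are adjacent. -/
def prodGraph {ι : Type*} {V : ι → Type*} (G : ∀ i, SimpleGraph (V i)) :
    SimpleGraph (∀ i, V i) where
  Adj x y := ∃ i, (G i).Adj (x i) (y i) ∧ ∀ j, j ≠ i → x j = y j
  symm := by
    constructor
    rintro x y ⟨i, hadj, hj⟩
    exact ⟨i, hadj.symm, fun j hji => (hj j hji).symm⟩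
  loopless := by
    constructor
    rintro x ⟨i, hadj, -⟩
    exact (G i).irrefl hadj

/-!
Pick a vertex `v a` in each branch set `μ a`. For an edge `ab` of `H` the two connected branch
sets are joined by an edge of `G`, so `μ a ∪ μ b` induces a connected subgraph and contains a walk
from `v a` to `v b`: this is the road of `ab`. Since each road stays inside the branch sets of its
endpoints, disjointness of the branch sets gives both conditions of a combinatorial embedding.
-/

lemma SimpleGraph.Preconnected.exists_walk_support_subset {W : Type*} {G : SimpleGraph W}
    {s : Set W} (hs : (G.induce s).Preconnected) {p q : W} (hp : p ∈ s) (hq : q ∈ s) :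
    ∃ w : G.Walk p q, ∀ z ∈ w.support, z ∈ s := by
  obtain ⟨w⟩ := hs ⟨p, hp⟩ ⟨q, hq⟩
  refine ⟨w.map (Embedding.induce s).toHom, fun z hz => ?_⟩
  obtain ⟨⟨z, hzs⟩, -, rfl⟩ := List.mem_map.mp (w.support_map (Embedding.induce s).toHom ▸ hz)
  exact hzs

def CombEmbedding.ofBranchSets {V W : Type*} {H : SimpleGraph V} {G : SimpleGraph W}
    (μ : V → Set W) (hμ : Pairwise fun a b => Disjoint (μ a) (μ b)) (v : V → W)
    (hv : ∀ a, v a ∈ μ a) (road : ∀ ⦃a b⦄, H.Adj a b → G.Walk (v a) (v b))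
    (hroad : ∀ ⦃a b⦄ (h : H.Adj a b), ∀ z ∈ (road h).support, z ∈ μ a ∪ μ b) :
    CombEmbedding H G where
  vmap := v
  inj a b hab := by
    by_contra hne
    exact Set.disjoint_left.mp (hμ hne) (hv a) (hab ▸ hv b)
  road := road
  disj a b c d h₁ h₂ hac had hbc hbd z hz₁ hz₂ := by
    rcases hroad h₁ z hz₁ with hz | hz <;> rcases hroad h₂ z hz₂ with hz' | hz'
    exacts [Set.disjoint_left.mp (hμ hac) hz hz', Set.disjoint_left.mp (hμ had) hz hz',
      Set.disjoint_left.mp (hμ hbc) hz hz', Set.disjoint_left.mp (hμ hbd) hz hz']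
  iso a b h w hwa hwb hw := by
    rcases hroad h (v w) hw with hz | hz
    exacts [Set.disjoint_left.mp (hμ hwa) (hv w) hz, Set.disjoint_left.mp (hμ hwb) (hv w) hz]

/-- If H is a minor of G, there is a combinatorial embedding of H into G. -/
theorem minor_to_combEmbedding {V W : Type*} (H : SimpleGraph V) (G : SimpleGraph W)
    (h : H.IsMinorOf G) : Nonempty (CombEmbedding H G) := by
  obtain ⟨μ, hconn, hdisj, hadj⟩ := h
  choose v hv using fun a => Set.nonempty_coe_sort.mp (hconn a).nonempty
  have hwalk : ∀ a b, H.Adj a b → ∃ w : G.Walk (v a) (v b), ∀ z ∈ w.support, z ∈ μ a ∪ μ b := by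
    intro a b hab
    obtain ⟨x, hx, y, hy, hxy⟩ := hadj hab
    have hunion := connected_induce_union (hconn a).preconnected (hconn b).preconnected hx hy hxy
    exact hunion.preconnected.exists_walk_support_subset (.inl (hv a)) (.inr (hv b))
  choose road hroad using hwalk
  exact ⟨.ofBranchSets μ hdisj v hv road hroad⟩
end

section
/- If there exists a model of a graph H in a graph G (a family of vertex-disjoint connected subgraphs of G indexed by V(H) such that adjacent vertices of H have subgraphs joined by an edge of G), then there exists a combinatorial embedding of H into G. -/
open SimpleGraph

/-
Pick a root `root a` in every branch set `μ a`. For an edge `ab` of `H`, the union `μ a ∪ μ b`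
induces a connected subgraph of `G` (the two connected branch sets are joined by an edge), so
it contains a walk from `root a` to `root b`; take it as the road of `ab`. Since every road
stays inside the branch sets of its two endpoints, disjointness of the branch sets gives
injectivity of the roots, disjointness of roads of non-adjacent edges, and that no other root
lies on a road.
-/

lemma eq_of_mem_of_pairwise_disjoint {ι α : Type*} {μ : ι → Set α}
    (hdisj : Pairwise fun a b => Disjoint (μ a) (μ b)) {a b : ι} {x : α}
    (ha : x ∈ μ a) (hb : x ∈ μ b) : a = b :=
  by_contra fun hab => Set.disjoint_left.mp (hdisj hab) ha hb

lemma SimpleGraph.Preconnected.exists_walk_support_subset_of_induce {W : Type*}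
    {G : SimpleGraph W} {s : Set W} (hs : (G.induce s).Preconnected) {x y : W}
    (hx : x ∈ s) (hy : y ∈ s) : ∃ p : G.Walk x y, ∀ z ∈ p.support, z ∈ s := by
  obtain ⟨p⟩ := hs ⟨x, hx⟩ ⟨y, hy⟩
  refine ⟨p.map (Embedding.induce s).toHom, fun z hz => ?_⟩
  -- the mapped walk's endpoints were unified with `x`, `y` only up to defeq
  change z ∈ (p.map (Embedding.induce s).toHom).support at hz
  rw [Walk.support_map, List.mem_map] at hz
  obtain ⟨z, -, rfl⟩ := hz
  exact z.2

namespace CombEmbedding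

variable {V W : Type*} {H : SimpleGraph V} {G : SimpleGraph W}

def ofBranchSets_s6 (μ : V → Set W) (hdisj : Pairwise fun a b => Disjoint (μ a) (μ b))
    (root : V → W) (hroot : ∀ a, root a ∈ μ a)
    (road : ∀ ⦃a b⦄, H.Adj a b → G.Walk (root a) (root b))
    (hroad : ∀ ⦃a b⦄ (h : H.Adj a b), ∀ z ∈ (road h).support, z ∈ μ a ∪ μ b) :
    CombEmbedding H G where
  vmap := root
  inj a b hab := eq_of_mem_of_pairwise_disjoint hdisj (hroot a) (hab ▸ hroot b)
  road := road
  disj a b c d h₁ h₂ hac had hbc hbd x hx₁ hx₂ := by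
    rcases hroad h₁ x hx₁ with hx | hx <;> rcases hroad h₂ x hx₂ with hy | hy
    · exact hac (eq_of_mem_of_pairwise_disjoint hdisj hx hy)
    · exact had (eq_of_mem_of_pairwise_disjoint hdisj hx hy)
    · exact hbc (eq_of_mem_of_pairwise_disjoint hdisj hx hy)
    · exact hbd (eq_of_mem_of_pairwise_disjoint hdisj hx hy)
  iso a b h w hwa hwb hw := by
    rcases hroad h _ hw with hx | hx
    · exact hwa (eq_of_mem_of_pairwise_disjoint hdisj (hroot w) hx)
    · exact hwb (eq_of_mem_of_pairwise_disjoint hdisj (hroot w) hx)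

end CombEmbedding

/-- If there is a model of H in G, there is a combinatorial embedding of H into G. -/
theorem model_to_combEmbedding {V W : Type*} (H : SimpleGraph V) (G : SimpleGraph W)
    (μ : V → Set W)
    (hconn : ∀ a, (G.induce (μ a)).Connected)
    (hdisj : Pairwise fun a b => Disjoint (μ a) (μ b))
    (hadj : ∀ ⦃a b⦄, H.Adj a b → ∃ x ∈ μ a, ∃ y ∈ μ b, G.Adj x y) :
    Nonempty (CombEmbedding H G) := by
  choose root hroot using fun a => Set.nonempty_coe_sort.mp (hconn a).nonempty
  have hroad : ∀ ⦃a b⦄, H.Adj a b →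
      ∃ p : G.Walk (root a) (root b), ∀ z ∈ p.support, z ∈ μ a ∪ μ b := by
    intro a b h
    obtain ⟨x, hx, y, hy, hxy⟩ := hadj h
    have hunion := connected_induce_union (hconn a).preconnected (hconn b).preconnected hx hy hxy
    exact hunion.preconnected.exists_walk_support_subset_of_induce
      (Or.inl (hroot a)) (Or.inr (hroot b))
  choose road hroad using hroad
  exact ⟨.ofBranchSets μ hdisj root hroot road hroad⟩
end

section
/- For any graph Γ with no isolated vertices and m edges, there exists a graph Γ′ with maximum degree at most 3 and at most 4m vertices such that Γ is a minor of Γ′. -/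
/-!
Instead of a binary tree, each vertex `v` is replaced by a path through the darts leaving `v`
(in the order of a fixed numbering of all darts), and the two darts of every edge are joined.
A dart then has at most two neighbours on its path and one across its edge, there are `2m`
darts, and contracting each path back to its vertex recovers `Γ`.
-/

open SimpleGraph

namespace SimpleGraph

variable {V W : Type*}

theorem induce_connected_of_covBy [LinearOrder W] {G : SimpleGraph W} {s : Set W}
    (hs : s.Finite) (hne : s.Nonempty) (h : ∀ a b : s, a ⋖ b → G.Adj a b) :
    (G.induce s).Connected := by
  have : Finite s := hs
  have : Nonempty s := hne.to_subtype
  let := SuccOrder.ofLinearWellFoundedLT s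
  refine Connected.mono ?_ ⟨hasse_preconnected_of_succ s⟩
  rintro a b (hab | hba)
  · exact h a b hab
  · exact (h b a hba).symm

theorem isMinorOf_of_fibres {H : SimpleGraph V} {G : SimpleGraph W} (π : W → V)
    (hconn : ∀ v, (G.induce (π ⁻¹' {v})).Connected)
    (hadj : ∀ ⦃a b⦄, H.Adj a b → ∃ x y, G.Adj x y ∧ π x = a ∧ π y = b) :
    H.IsMinorOf G := by
  refine ⟨fun v => π ⁻¹' {v}, hconn, fun a b hab => ?_, fun a b hab => ?_⟩
  · exact (Set.disjoint_singleton.2 hab).preimage π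
  · obtain ⟨x, y, hxy, rfl, rfl⟩ := hadj hab
    exact ⟨x, rfl, y, rfl, hxy⟩

section LinearOrder

variable [LinearOrder W]

def FibreCovBy (π : W → V) (i j : W) : Prop :=
  π j = π i ∧ i < j ∧ ∀ k, π k = π i → i < k → ¬k < j

theorem FibreCovBy.unique_right {π : W → V} {i j j' : W} (h : FibreCovBy π i j)
    (h' : FibreCovBy π i j') : j = j' := by
  rcases lt_trichotomy j j' with hlt | rfl | hgt
  · exact absurd hlt (h'.2.2 j h.1 h.2.1)
  · rfl
  · exact absurd hgt (h.2.2 j' h'.1 h'.2.1)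

theorem FibreCovBy.unique_left {π : W → V} {i i' j : W} (h : FibreCovBy π i j)
    (h' : FibreCovBy π i' j) : i = i' := by
  rcases lt_trichotomy i i' with hlt | rfl | hgt
  · exact absurd h'.2.1 (h.2.2 i' (h'.1.symm.trans h.1) hlt)
  · rfl
  · exact absurd h.2.1 (h'.2.2 i (h.1.symm.trans h'.1) hgt)

def fibrePath (π : W → V) : SimpleGraph W := fromRel (FibreCovBy π)

theorem ncard_neighborSet_fibrePath_le (π : W → V) (w : W) :
    ((fibrePath π).neighborSet w).ncard ≤ 2 := by
  have hsucc : {j | FibreCovBy π w j}.Subsingleton := fun _ h _ h' => h.unique_right h'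
  have hpred : {j | FibreCovBy π j w}.Subsingleton := fun _ h _ h' => h.unique_left h'
  have hsub : (fibrePath π).neighborSet w ⊆ {j | FibreCovBy π w j} ∪ {j | FibreCovBy π j w} :=
    fun j hj => hj.2
  calc ((fibrePath π).neighborSet w).ncard
      ≤ {j | FibreCovBy π w j}.ncard + {j | FibreCovBy π j w}.ncard :=
        (Set.ncard_le_ncard hsub (hsucc.finite.union hpred.finite)).trans (Set.ncard_union_le _ _)
    _ ≤ 1 + 1 :=
        add_le_add ((Set.ncard_le_one hsucc.finite).2 hsucc)
          ((Set.ncard_le_one hpred.finite).2 hpred)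

theorem induce_fibrePath_connected [Finite W] {π : W → V} {v : V} (hv : v ∈ Set.range π) :
    ((fibrePath π).induce (π ⁻¹' {v})).Connected := by
  refine induce_connected_of_covBy (Set.toFinite _) hv fun a b hab => ⟨?_, Or.inl ?_⟩
  · exact Subtype.coe_injective.ne hab.ne
  · refine ⟨b.2.trans a.2.symm, hab.lt, fun k hk hak hkb => hab.2 (c := ⟨k, ?_⟩) hak hkb⟩
    exact hk.trans a.2

end LinearOrder

def involutionGraph (σ : W → W) : SimpleGraph W := fromRel fun i j => j = σ i

theorem ncard_neighborSet_involutionGraph_le {σ : W → W} (hσ : Function.Involutive σ) (w : W) :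
    ((involutionGraph σ).neighborSet w).ncard ≤ 1 := by
  have hsub : (involutionGraph σ).neighborSet w ⊆ {σ w} := by
    rintro j ⟨-, h | rfl⟩
    exacts [h, (hσ j).symm]
  exact (Set.ncard_le_ncard hsub).trans (Set.ncard_singleton _).le

end SimpleGraph

/-- Every graph with no isolated vertices and m edges is a minor of a graph with
maximum degree at most 3 and at most 4m vertices. -/
theorem minor_of_max_degree_three {V : Type*} [Fintype V] (Γ : SimpleGraph V)
    [DecidableRel Γ.Adj] (hiso : ∀ v, ∃ u, Γ.Adj v u) (m : ℕ)
    (hm : Γ.edgeFinset.card = m) :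
    ∃ (N : ℕ) (Γ' : SimpleGraph (Fin N)), N ≤ 4 * m ∧
      (∀ w, (Γ'.neighborSet w).ncard ≤ 3) ∧ Γ.IsMinorOf Γ' := by
  let d : Fin (Fintype.card Γ.Dart) ≃ Γ.Dart := (Fintype.equivFin _).symm
  let π i := (d i).fst
  let σ i := d.symm (d i).symm
  have hσ : Function.Involutive σ := fun i => by simp [σ]
  refine ⟨_, fibrePath π ⊔ involutionGraph σ, ?_, fun w => ?_, ?_⟩
  · rw [dart_card_eq_twice_card_edges, hm]
    omega
  · rw [neighborSet_sup]
    exact (Set.ncard_union_le _ _).trans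
      (add_le_add (ncard_neighborSet_fibrePath_le π w) (ncard_neighborSet_involutionGraph_le hσ w))
  · refine isMinorOf_of_fibres π (fun v => ?_) fun a b hab => ?_
    · obtain ⟨u, hu⟩ := hiso v
      exact (induce_fibrePath_connected ⟨d.symm ⟨(v, u), hu⟩, by simp [π]⟩).mono
        (comap_monotone _ le_sup_left)
    · refine ⟨d.symm ⟨(a, b), hab⟩, d.symm ⟨(b, a), hab.symm⟩, Or.inr ⟨?_, Or.inl ?_⟩, ?_, ?_⟩ <;>
        simp [σ, π, hab.ne]
end

section
/- Let Γ be a graph, Y a graph, N ∈ ℕ, and let (f, {γ_e^i}) be an N-piecewise embedding of Γ into Y. Then there exists a combinatorial embedding f̃ of Γ into the Cartesian product C_{N+1} × Y such that f̃(v) = (0, f(v)) for every vertex v of Γ. -/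
open SimpleGraph

/-- An `N`-piecewise embedding of `Γ` into `Y`: an injective vertex map together with,
for each edge, a chain of `N` walks (pieces) whose concatenation joins the images of the
endpoints; pieces with the same index belonging to non-adjacent edges are vertex-disjoint. -/
structure PiecewiseEmbedding {V W : Type*} (Γ : SimpleGraph V) (Y : SimpleGraph W)
    (N : ℕ) where
  vmap : V → W
  inj : Function.Injective vmap
  pt : ∀ ⦃a b⦄, Γ.Adj a b → Fin (N + 1) → W
  pt_first : ∀ ⦃a b⦄ (h : Γ.Adj a b), pt h 0 = vmap a
  pt_last : ∀ ⦃a b⦄ (h : Γ.Adj a b), pt h (Fin.last N) = vmap b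
  piece : ∀ ⦃a b⦄ (h : Γ.Adj a b) (i : Fin N), Y.Walk (pt h i.castSucc) (pt h i.succ)
  disj : ∀ ⦃a b c d⦄ (h₁ : Γ.Adj a b) (h₂ : Γ.Adj c d),
    a ≠ c → a ≠ d → b ≠ c → b ≠ d →
    ∀ (i : Fin N) (x : W), x ∈ (piece h₁ i).support → x ∉ (piece h₂ i).support

/-!
The road of an edge is a staircase in `C_{N+1} □ Y`: it climbs from level `i` to level `i + 1`
and runs along the `i`-th piece there, and after the last piece it closes the cycle from level `N`
back to level `0`. Level `0` meets a road only in its two endpoints and level `i + 1` only in a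
copy of the `i`-th piece, so disjointness of same-index pieces yields disjointness of roads.
-/

namespace SimpleGraph

variable {L W : Type*} {G : SimpleGraph L} {Y : SimpleGraph W}

theorem Walk.mem_support_boxProdRight {a : L} {y₁ y₂ : W} (w : Y.Walk y₁ y₂) {v : L × W} :
    v ∈ (w.boxProdRight G a).support ↔ v.1 = a ∧ v.2 ∈ w.support := by
  change v ∈ (w.map (G.boxProdRight Y a).toHom).support ↔ _
  rw [Walk.support_map]
  obtain ⟨l, y⟩ := v
  simp [eq_comm, and_comm]

def boxProdStaircase : ∀ {N : ℕ} (ℓ : Fin (N + 1) → L)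
    (_ : ∀ i : Fin N, G.Adj (ℓ i.castSucc) (ℓ i.succ)) (x : Fin (N + 1) → W)
    (_ : ∀ i : Fin N, Y.Walk (x i.castSucc) (x i.succ)),
    (G □ Y).Walk (ℓ 0, x 0) (ℓ (Fin.last N), x (Fin.last N))
  | 0, _, _, _, _ => .nil
  | N + 1, ℓ, hℓ, x, p =>
    -- The casts along `castSucc 0 = 0`, `succ (castSucc i) = castSucc (succ i)` and
    -- `succ (last N) = last (N + 1)` (not reducible defeqs) let `rw` unfold this definition.
    Walk.copy
      (.cons (boxProd_adj_left.2 (hℓ 0))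
        (((p 0).boxProdRight G (ℓ (Fin.succ 0))).append
          (boxProdStaircase (fun i => ℓ i.succ) (fun i => Fin.succ_castSucc i ▸ hℓ i.succ)
            (fun i => x i.succ) (fun i => (p i.succ).copy (by rw [Fin.succ_castSucc]) rfl))))
      (by rw [Fin.castSucc_zero]) (by rw [Fin.succ_last])

theorem mem_support_boxProdStaircase {N : ℕ} {ℓ : Fin (N + 1) → L}
    {hℓ : ∀ i : Fin N, G.Adj (ℓ i.castSucc) (ℓ i.succ)} {x : Fin (N + 1) → W}
    {p : ∀ i : Fin N, Y.Walk (x i.castSucc) (x i.succ)} {v : L × W}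
    (hv : v ∈ (boxProdStaircase ℓ hℓ x p).support) :
    v = (ℓ 0, x 0) ∨ ∃ i, v.1 = ℓ i.succ ∧ v.2 ∈ (p i).support := by
  induction N with
  | zero => simpa [boxProdStaircase] using hv
  | succ N ih =>
    rw [boxProdStaircase, Walk.support_copy, Walk.support_cons, List.mem_cons,
      Walk.mem_support_append_iff, Walk.mem_support_boxProdRight] at hv
    rcases hv with rfl | hv | hv
    · exact .inl rfl
    · exact .inr ⟨0, hv⟩
    · rcases ih hv with rfl | ⟨i, hi⟩
      · exact .inr ⟨0, rfl, Walk.end_mem_support _⟩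
      · exact .inr ⟨i.succ, hi⟩

theorem cycleGraph_adj_castSucc_succ {n : ℕ} (i : Fin n) :
    (cycleGraph (n + 1)).Adj i.castSucc i.succ :=
  pathGraph_le_cycleGraph (by simp [pathGraph_adj])

theorem cycleGraph_adj_last_zero {n : ℕ} (hn : n ≠ 0) :
    (cycleGraph (n + 1)).Adj (Fin.last n) 0 := by
  obtain ⟨m, rfl⟩ := Nat.exists_eq_add_one_of_ne_zero hn
  exact .inr (sub_eq_iff_eq_add.2 ((add_comm _ _).trans (Fin.last_add_one _)).symm)

end SimpleGraph

namespace PiecewiseEmbedding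

variable {V W : Type*} {Γ : SimpleGraph V} {Y : SimpleGraph W} {N : ℕ} {a b c d : V}

theorem ne_zero_of_adj (P : PiecewiseEmbedding Γ Y N) (h : Γ.Adj a b) : N ≠ 0 := by
  rintro rfl
  refine h.ne (P.inj ?_)
  rw [← P.pt_first h, ← P.pt_last h]
  rfl

def road (P : PiecewiseEmbedding Γ Y N) (h : Γ.Adj a b) :
    (cycleGraph (N + 1) □ Y).Walk (0, P.vmap a) (0, P.vmap b) :=
  ((boxProdStaircase (fun i => i) cycleGraph_adj_castSucc_succ (P.pt h) (P.piece h)).concat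
      (boxProd_adj_left.2 (cycleGraph_adj_last_zero (P.ne_zero_of_adj h)))).copy
    (by rw [P.pt_first h]) (by rw [P.pt_last h])

theorem mem_support_road (P : PiecewiseEmbedding Γ Y N) (h : Γ.Adj a b) {v : Fin (N + 1) × W}
    (hv : v ∈ (P.road h).support) :
    v = (0, P.vmap a) ∨ v = (0, P.vmap b) ∨
      ∃ i : Fin N, v.1 = i.succ ∧ v.2 ∈ (P.piece h i).support := by
  rw [road, Walk.support_copy, Walk.support_concat, List.mem_append,
    List.mem_singleton] at hv
  rcases hv with hv | rfl
  · rcases mem_support_boxProdStaircase hv with rfl | hv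
    · exact .inl (by rw [P.pt_first h])
    · exact .inr (.inr hv)
  · exact .inr (.inl (by rw [P.pt_last h]))

theorem road_support_disjoint (P : PiecewiseEmbedding Γ Y N) (h₁ : Γ.Adj a b) (h₂ : Γ.Adj c d)
    (hac : a ≠ c) (had : a ≠ d) (hbc : b ≠ c) (hbd : b ≠ d) {v : Fin (N + 1) × W}
    (hv₁ : v ∈ (P.road h₁).support) :
    v ∉ (P.road h₂).support := by
  intro hv₂
  rcases P.mem_support_road h₁ hv₁ with rfl | rfl | ⟨i, hi, hv₁⟩ <;>
    rcases P.mem_support_road h₂ hv₂ with h | h | ⟨j, hj, hv₂⟩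
  · exact hac (P.inj (congrArg Prod.snd h))
  · exact had (P.inj (congrArg Prod.snd h))
  · exact Fin.succ_ne_zero j hj.symm
  · exact hbc (P.inj (congrArg Prod.snd h))
  · exact hbd (P.inj (congrArg Prod.snd h))
  · exact Fin.succ_ne_zero j hj.symm
  · exact Fin.succ_ne_zero i (hi.symm.trans (congrArg Prod.fst h))
  · exact Fin.succ_ne_zero i (hi.symm.trans (congrArg Prod.fst h))
  · obtain rfl := Fin.succ_injective _ (hi.symm.trans hj)
    exact P.disj h₁ h₂ hac had hbc hbd i v.2 hv₁ hv₂

theorem vmap_not_mem_support_road (P : PiecewiseEmbedding Γ Y N) (h : Γ.Adj a b) {w : V}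
    (hwa : w ≠ a) (hwb : w ≠ b) : ((0 : Fin (N + 1)), P.vmap w) ∉ (P.road h).support := by
  intro hw
  rcases P.mem_support_road h hw with h | h | ⟨i, hi, -⟩
  · exact hwa (P.inj (congrArg Prod.snd h))
  · exact hwb (P.inj (congrArg Prod.snd h))
  · exact Fin.succ_ne_zero i hi.symm

def toCombEmbedding (P : PiecewiseEmbedding Γ Y N) :
    CombEmbedding Γ (cycleGraph (N + 1) □ Y) where
  vmap v := (0, P.vmap v)
  inj _ _ h := P.inj (congrArg Prod.snd h)
  road _ _ := P.road
  disj _ _ _ _ h₁ h₂ hac had hbc hbd _ := P.road_support_disjoint h₁ h₂ hac had hbc hbd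
  iso _ _ h _ := P.vmap_not_mem_support_road h

end PiecewiseEmbedding

/-- An N-piecewise embedding of Γ into Y yields a combinatorial embedding of Γ into
the box product of the cycle C_{N+1} with Y, with each vertex v mapped to (0, f v). -/
theorem piecewise_to_combEmbedding {V W : Type*} (Γ : SimpleGraph V) (Y : SimpleGraph W)
    (N : ℕ) (P : PiecewiseEmbedding Γ Y N) :
    ∃ F : CombEmbedding Γ (SimpleGraph.cycleGraph (N + 1) □ Y),
      ∀ v, F.vmap v = (0, P.vmap v) :=
  ⟨P.toCombEmbedding, fun _ => rfl⟩
end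

section
/- There exists an absolute constant C > 0 such that for every d ∈ ℕ, there is a graph with at most C·2^d/√d edges and no isolated vertices that is not a minor of the d-dimensional hypercube Q_d. -/
open SimpleGraph

/-- The `d`-dimensional hypercube: vertices are `{0,1}`-strings of length `d`, adjacent iff
they differ in exactly one coordinate. -/
def hypercube (d : ℕ) : SimpleGraph (Fin d → Bool) :=
  prodGraph fun _ => (⊤ : SimpleGraph Bool)

/-!
Let `M = (d choose ⌊d/2⌋)` be the size of the largest level of `Q_d`, and take a graph on
`n = 12 M` vertices with `O(n)` edges in which any two disjoint sets of at least `n / 4` vertices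
are joined by an edge (a union bound shows that `22 n` random edges do it), plus a star against
isolated vertices. In a minor model in `Q_d` each branch set is connected, so the Hamming weights of
its vertices form an interval. Take the first level `K` such that a third of the branch sets lie at
levels `≤ K`. At most `M` disjoint branch sets meet level `K`, so at least `n / 4` branch sets lie
strictly below `K` and at least `n / 4` strictly above; no edge of `Q_d` joins those two families.
Finally `d M² ≤ 4 ^ d`, so the `23 n = 276 M` edges are `O(2 ^ d / √d)`.
-/

open Finset

theorem Nat.exists_lt_and_le_succ {g : ℕ → ℕ} {t N : ℕ} (h0 : g 0 < t) (hN : t ≤ g N) :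
    ∃ K, g K < t ∧ t ≤ g (K + 1) := by
  induction N with
  | zero => omega
  | succ N ih =>
    by_cases h : t ≤ g N
    · exact ih h
    · exact ⟨N, not_le.1 h, hN⟩

theorem Finset.card_le_card_of_pairwise_disjoint_of_inter_nonempty {ι α : Type*}
    {μ : ι → Set α} (hμ : Pairwise fun a b => Disjoint (μ a) (μ b)) {s : Finset α}
    {T : Finset ι} (hT : ∀ a ∈ T, ((s : Set α) ∩ μ a).Nonempty) : #T ≤ #s := by
  classical
  calc #T ≤ #(T.biUnion fun a => s.filter (· ∈ μ a)) :=
        card_le_card_biUnion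
          (fun a _ b _ hab => disjoint_left.2 fun x hxa hxb =>
            Set.disjoint_left.1 (hμ hab) (mem_filter.1 hxa).2 (mem_filter.1 hxb).2)
          fun a ha => by simpa [Finset.Nonempty, Set.Nonempty] using hT a ha
    _ ≤ #s := card_le_card (biUnion_subset.2 fun _ _ => filter_subset _ _)

namespace Nat

theorem three_mul_add_one_mul_centralBinom_sq_le (m : ℕ) :
    (3 * m + 1) * centralBinom m ^ 2 ≤ 16 ^ m := by
  induction m with
  | zero => simp
  | succ m ih =>
    have hpos : 0 < (3 * m + 1) * (m + 1) ^ 2 := by positivity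
    refine Nat.le_of_mul_le_mul_left ?_ hpos
    calc (3 * m + 1) * (m + 1) ^ 2 * ((3 * (m + 1) + 1) * centralBinom (m + 1) ^ 2)
        = (3 * m + 1) * (3 * m + 4) * ((m + 1) * centralBinom (m + 1)) ^ 2 := by ring
      _ = ((3 * m + 4) * (2 * (2 * m + 1)) ^ 2) * ((3 * m + 1) * centralBinom m ^ 2) := by
          rw [succ_mul_centralBinom_succ]; ring
      _ ≤ (16 * (m + 1) ^ 2 * (3 * m + 1)) * 16 ^ m := Nat.mul_le_mul (by nlinarith) ih
      _ = (3 * m + 1) * (m + 1) ^ 2 * 16 ^ (m + 1) := by ring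

theorem mul_choose_half_sq_le_four_pow (d : ℕ) : d * d.choose (d / 2) ^ 2 ≤ 4 ^ d := by
  rcases Nat.even_or_odd' d with ⟨m, rfl | rfl⟩
  · rw [Nat.mul_div_cancel_left m two_pos, ← centralBinom_eq_two_mul_choose, pow_mul]
    calc 2 * m * centralBinom m ^ 2 ≤ (3 * m + 1) * centralBinom m ^ 2 :=
          Nat.mul_le_mul_right _ (by omega)
      _ ≤ (4 ^ 2) ^ m := three_mul_add_one_mul_centralBinom_sq_le m
  · have hdouble : 2 * (2 * m + 1).choose m = centralBinom (m + 1) := by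
      rw [centralBinom_eq_two_mul_choose, show 2 * (m + 1) = 2 * m + 1 + 1 by ring,
        choose_succ_succ, ← choose_symm_half m]
      ring
    rw [show (2 * m + 1) / 2 = m by omega]
    refine Nat.le_of_mul_le_mul_left ?_ (show 0 < 4 by norm_num)
    calc 4 * ((2 * m + 1) * (2 * m + 1).choose m ^ 2)
        = (2 * m + 1) * centralBinom (m + 1) ^ 2 := by rw [← hdouble]; ring
      _ ≤ (3 * (m + 1) + 1) * centralBinom (m + 1) ^ 2 := Nat.mul_le_mul_right _ (by omega)
      _ ≤ 16 ^ (m + 1) := three_mul_add_one_mul_centralBinom_sq_le (m + 1)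
      _ = 4 * 4 ^ (2 * m + 1) := by rw [show (16 : ℕ) = 4 ^ 2 by rfl, ← pow_mul]; ring

end Nat

theorem choose_half_mul_sqrt_le_two_pow (d : ℕ) : (d.choose (d / 2) : ℝ) * √d ≤ 2 ^ d := by
  have h : ((d.choose (d / 2) : ℕ) : ℝ) ^ 2 * d ≤ (2 ^ d) ^ 2 := by
    rw [← pow_mul, mul_comm d 2, pow_mul]
    exact_mod_cast (mul_comm _ _).trans_le (Nat.mul_choose_half_sq_le_four_pow d)
  calc (d.choose (d / 2) : ℝ) * √d = √((d.choose (d / 2) : ℝ) ^ 2 * d) := by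
        rw [Real.sqrt_mul (by positivity), Real.sqrt_sq (by positivity)]
    _ ≤ √((2 ^ d) ^ 2) := Real.sqrt_le_sqrt h
    _ = 2 ^ d := Real.sqrt_sq (by positivity)

namespace SimpleGraph

section Lipschitz

variable {V : Type*} {G : SimpleGraph V} {f : V → ℕ}

theorem Walk.exists_mem_support_apply_eq (hf : ∀ ⦃x y⦄, G.Adj x y → f y ≤ f x + 1)
    {u v : V} (p : G.Walk u v) {k : ℕ} (hu : f u ≤ k) (hv : k ≤ f v) :
    ∃ z ∈ p.support, f z = k := by
  induction p with
  | nil => exact ⟨_, start_mem_support _, le_antisymm hu hv⟩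
  | @cons u w v h p ih =>
    by_cases hw : f w ≤ k
    · obtain ⟨z, hz, rfl⟩ := ih hw hv
      exact ⟨z, by simp [hz], rfl⟩
    · exact ⟨u, start_mem_support _, by have := hf h; omega⟩

theorem forall_lt_or_forall_gt_of_induce_preconnected
    (hf : ∀ ⦃x y⦄, G.Adj x y → f y ≤ f x + 1) {s : Set V} (hs : (G.induce s).Preconnected)
    {k : ℕ} (hk : ∀ x ∈ s, f x ≠ k) : (∀ x ∈ s, f x < k) ∨ ∀ x ∈ s, k < f x := by
  by_contra! ⟨⟨x, hxs, hx⟩, ⟨y, hys, hy⟩⟩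
  obtain ⟨p⟩ := hs ⟨y, hys⟩ ⟨x, hxs⟩
  obtain ⟨z, -, hz⟩ := p.exists_mem_support_apply_eq (f := f ∘ Subtype.val)
    (fun _ _ h => hf h) hy hx
  exact hk z z.2 hz

end Lipschitz

variable {V : Type*} [Fintype V]

def LinksQuarters (G : SimpleGraph V) : Prop :=
  ∀ A B : Finset V, Disjoint A B → Fintype.card V ≤ 4 * #A → Fintype.card V ≤ 4 * #B →
    ∃ a ∈ A, ∃ b ∈ B, G.Adj a b

theorem LinksQuarters.mono {G H : SimpleGraph V} (hGH : G ≤ H) (hG : G.LinksQuarters) :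
    H.LinksQuarters := fun A B hAB hA hB =>
  let ⟨a, ha, b, hb, hab⟩ := hG A B hAB hA hB
  ⟨a, ha, b, hb, hGH hab⟩

end SimpleGraph

section RandomEdges

variable {V : Type*} [Fintype V]

theorem card_piFinset_compl_product_le [DecidableEq V] (m : ℕ) {A B : Finset V}
    (hA : Fintype.card V ≤ 4 * #A) (hB : Fintype.card V ≤ 4 * #B) :
    16 ^ m * #(Fintype.piFinset fun _ : Fin m => (A ×ˢ B)ᶜ) ≤
      15 ^ m * (Fintype.card V * Fintype.card V) ^ m := by
  rw [Fintype.card_piFinset, prod_const, card_univ, Fintype.card_fin, card_compl, card_product,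
    Fintype.card_prod, ← mul_pow, ← mul_pow]
  gcongr ?_ ^ m
  have : Fintype.card V * Fintype.card V ≤ 16 * (#A * #B) := by nlinarith
  generalize Fintype.card V * Fintype.card V = N at this ⊢
  omega

theorem exists_forall_exists_mem_product [Nonempty V] :
    ∃ f : Fin (22 * Fintype.card V) → V × V, ∀ A B : Finset V,
      Fintype.card V ≤ 4 * #A → Fintype.card V ≤ 4 * #B → ∃ i, f i ∈ A ×ˢ B := by
  classical
  by_contra! hbad
  set n := Fintype.card V
  set m := 22 * n
  let large : Finset (Finset V × Finset V) := {p | n ≤ 4 * #p.1 ∧ n ≤ 4 * #p.2}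
  let avoid (p : Finset V × Finset V) := Fintype.piFinset fun _ : Fin m => (p.1 ×ˢ p.2)ᶜ
  have hcover : (univ : Finset (Fin m → V × V)) ⊆ large.biUnion avoid := fun f _ => by
    obtain ⟨A, B, hA, hB, hf⟩ := hbad f
    exact mem_biUnion.2 ⟨(A, B), by simp [large, hA, hB], by simpa [avoid] using hf⟩
  have hlarge : #large ≤ 4 ^ n :=
    (card_filter_le _ _).trans (by simp [n, ← mul_pow])
  have hcount : 16 ^ m * (n * n) ^ m ≤ 4 ^ n * 15 ^ m * (n * n) ^ m :=
    calc 16 ^ m * (n * n) ^ m = 16 ^ m * #(univ : Finset (Fin m → V × V)) := by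
          simp [n, mul_pow]
      _ ≤ ∑ p ∈ large, 16 ^ m * #(avoid p) := by
          rw [← mul_sum]
          exact Nat.mul_le_mul_left _ ((card_le_card hcover).trans card_biUnion_le)
      _ ≤ ∑ p ∈ large, 15 ^ m * (n * n) ^ m := sum_le_sum fun p hp =>
          card_piFinset_compl_product_le m (mem_filter.1 hp).2.1 (mem_filter.1 hp).2.2
      _ ≤ 4 ^ n * 15 ^ m * (n * n) ^ m := by
          rw [sum_const, smul_eq_mul, mul_assoc]; gcongr
  have hn : 0 < n := Fintype.card_pos
  have hlt : 4 ^ n * 15 ^ m < 16 ^ m := by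
    simp only [m, pow_mul, ← mul_pow]
    exact Nat.pow_lt_pow_left (by norm_num) hn.ne'
  have := Nat.mul_lt_mul_of_pos_right hlt (pow_pos (Nat.mul_pos hn hn) m)
  omega

theorem exists_linksQuarters [Nonempty V] :
    ∃ G : SimpleGraph V, G.edgeSet.ncard ≤ 22 * Fintype.card V ∧ G.LinksQuarters := by
  obtain ⟨f, hf⟩ := exists_forall_exists_mem_product (V := V)
  refine ⟨SimpleGraph.fromEdgeSet (Set.range fun i => s((f i).1, (f i).2)), ?_,
    fun A B hAB hA hB => ?_⟩
  · rw [SimpleGraph.edgeSet_fromEdgeSet]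
    calc _ ≤ (Set.range fun i => s((f i).1, (f i).2)).ncard :=
          Set.ncard_le_ncard Set.sdiff_subset
      _ ≤ 22 * Fintype.card V := by
          rw [← Nat.card_coe_set_eq]
          exact (Finite.card_range_le _).trans (by simp)
  · obtain ⟨i, hi⟩ := hf A B hA hB
    obtain ⟨ha, hb⟩ := mem_product.1 hi
    exact ⟨_, ha, _, hb, (SimpleGraph.fromEdgeSet_adj _).2
      ⟨⟨i, rfl⟩, fun h => Finset.disjoint_left.1 hAB ha (h ▸ hb)⟩⟩

end RandomEdges

namespace Hypercube

variable {d : ℕ}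

def weight (x : Fin d → Bool) : ℕ := #{i | x i}

theorem weight_le (x : Fin d → Bool) : weight x ≤ d :=
  (card_filter_le _ _).trans (by simp)

theorem weight_le_weight_add_one_of_adj ⦃x y : Fin d → Bool⦄ (h : (hypercube d).Adj x y) :
    weight y ≤ weight x + 1 := by
  obtain ⟨i, -, hi⟩ := h
  calc weight y ≤ #(insert i ({j | x j} : Finset _)) := card_le_card fun j hj => by
        by_cases hji : j = i
        · simp [hji]
        · simpa [hji, hi j hji] using hj
    _ ≤ weight x + 1 := card_insert_le _ _

theorem card_weight_eq_le (k : ℕ) : #{x : Fin d → Bool | weight x = k} ≤ d.choose k :=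
  calc #{x : Fin d → Bool | weight x = k}
      ≤ #(powersetCard k (univ : Finset (Fin d))) :=
        card_le_card_of_injOn (fun x => ({i | x i} : Finset _))
          (fun x hx => by simpa [mem_powersetCard, weight] using (mem_filter.1 (mem_coe.1 hx)).2)
          (fun x _ y _ hxy => funext fun i => by simpa using congr(i ∈ $hxy))
    _ = d.choose k := by simp

variable {V : Type*} [Fintype V] {μ : V → Set (Fin d → Bool)}

open Classical in
theorem card_meeting_level_le (hμ : Pairwise fun a b => Disjoint (μ a) (μ b)) (k : ℕ) :
    #{a | ∃ x ∈ μ a, weight x = k} ≤ d.choose (d / 2) :=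
  calc #{a | ∃ x ∈ μ a, weight x = k} ≤ #{x : Fin d → Bool | weight x = k} :=
        card_le_card_of_pairwise_disjoint_of_inter_nonempty hμ fun a ha => by
          obtain ⟨x, hx, hxk⟩ := (mem_filter.1 ha).2
          exact ⟨x, by simpa using hxk, hx⟩
    _ ≤ d.choose k := card_weight_eq_le k
    _ ≤ d.choose (d / 2) := Nat.choose_le_middle k d

open Classical in
theorem exists_threshold_level (hne : ∀ a, (μ a).Nonempty) (hV : 0 < Fintype.card V) :
    ∃ K, 3 * #{a | ∀ x ∈ μ a, weight x < K} < Fintype.card V ∧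
      Fintype.card V ≤ 3 * #{a | ∀ x ∈ μ a, weight x < K + 1} := by
  refine Nat.exists_lt_and_le_succ
    (g := fun k => 3 * #({a | ∀ x ∈ μ a, weight x < k} : Finset V)) (N := d + 1) ?_ ?_
  · have : ({a | ∀ x ∈ μ a, weight x < 0} : Finset V) = ∅ :=
      eq_empty_of_forall_notMem fun a ha =>
        let ⟨x, hx⟩ := hne a; Nat.not_lt_zero _ ((mem_filter.1 ha).2 x hx)
    beta_reduce
    rw [this, card_empty, mul_zero]
    exact hV
  · have : ({a | ∀ x ∈ μ a, weight x < d + 1} : Finset V) = univ :=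
      filter_true_of_mem fun a _ x _ => Nat.lt_succ_of_le (weight_le x)
    beta_reduce
    rw [this, card_univ]
    omega

theorem exists_separated_quarters (hconn : ∀ a, ((hypercube d).induce (μ a)).Connected)
    (hμ : Pairwise fun a b => Disjoint (μ a) (μ b))
    (hcard : 12 * d.choose (d / 2) ≤ Fintype.card V) :
    ∃ K, ∃ A B : Finset V, Disjoint A B ∧
      Fintype.card V ≤ 4 * #A ∧ Fintype.card V ≤ 4 * #B ∧
      (∀ a ∈ A, ∀ x ∈ μ a, weight x < K) ∧ ∀ b ∈ B, ∀ y ∈ μ b, K < weight y := by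
  classical
  have hne (a : V) : (μ a).Nonempty := let ⟨⟨x, hx⟩⟩ := (hconn a).nonempty; ⟨x, hx⟩
  have hM : 0 < d.choose (d / 2) := Nat.choose_pos (Nat.div_le_self d 2)
  obtain ⟨K, hK, hK1⟩ := exists_threshold_level hne (hcard.trans_lt' (by omega))
  set A : Finset V := {a | ∀ x ∈ μ a, weight x < K}
  set T : Finset V := {a | ∃ x ∈ μ a, weight x = K}
  let B : Finset V := {a | ∀ x ∈ μ a, K < weight x}
  have hT : #T ≤ d.choose (d / 2) := card_meeting_level_le hμ K
  have hnotT {a : V} (ha : a ∉ T) : ∀ x ∈ μ a, weight x ≠ K := fun x hx h =>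
    ha (mem_filter.2 ⟨mem_univ _, x, hx, h⟩)
  have hbelow : ({a | ∀ x ∈ μ a, weight x < K + 1} : Finset V) ⊆ A ∪ T := fun a ha => by
    by_cases haT : a ∈ T
    · exact mem_union_right _ haT
    · refine mem_union_left _ (mem_filter.2 ⟨mem_univ _, fun x hx => ?_⟩)
      have := (mem_filter.1 ha).2 x hx
      have := hnotT haT x hx
      omega
  have hcover : univ ⊆ A ∪ T ∪ B := fun a _ => by
    by_cases haT : a ∈ T
    · exact mem_union_left _ (mem_union_right _ haT)
    · rcases forall_lt_or_forall_gt_of_induce_preconnected weight_le_weight_add_one_of_adj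
        (hconn a).preconnected (hnotT haT) with hlt | hgt
      · exact mem_union_left _ (mem_union_left _ (mem_filter.2 ⟨mem_univ _, hlt⟩))
      · exact mem_union_right _ (mem_filter.2 ⟨mem_univ _, hgt⟩)
  have hAB : Disjoint A B := Finset.disjoint_left.2 fun a haA haB => by
    obtain ⟨x, hx⟩ := hne a
    have := (mem_filter.1 haA).2 x hx
    have := (mem_filter.1 haB).2 x hx
    omega
  have h1 := (card_le_card hbelow).trans (card_union_le A T)
  have h2 := ((card_le_card hcover).trans (card_union_le _ _)).trans
    (Nat.add_le_add_right (card_union_le A T) _)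
  rw [card_univ] at h2
  exact ⟨K, A, B, hAB, by omega, by omega, fun a ha => (mem_filter.1 ha).2,
    fun b hb => (mem_filter.1 hb).2⟩

end Hypercube

open Hypercube in
theorem SimpleGraph.LinksQuarters.not_isMinorOf_hypercube {V : Type*} [Fintype V]
    {G : SimpleGraph V} (hG : G.LinksQuarters) {d : ℕ}
    (hcard : 12 * d.choose (d / 2) ≤ Fintype.card V) : ¬ G.IsMinorOf (hypercube d) := by
  rintro ⟨μ, hconn, hμ, hadj⟩
  obtain ⟨K, A, B, hAB, hA, hB, hAK, hBK⟩ := exists_separated_quarters hconn hμ hcard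
  obtain ⟨a, ha, b, hb, hab⟩ := hG A B hAB hA hB
  obtain ⟨x, hx, y, hy, hxy⟩ := hadj hab
  have := weight_le_weight_add_one_of_adj hxy
  have := hAK a ha x hx
  have := hBK b hb y hy
  omega

/-- There is a constant C > 0 such that for every d there is a graph with at most
C 2^d / √d edges and no isolated vertices that is not a minor of the hypercube Q_d. -/
theorem hypercube_not_minor_universal :
    ∃ C : ℝ, 0 < C ∧ ∀ d : ℕ, ∃ (N : ℕ) (Γ : SimpleGraph (Fin N)),
      (Γ.edgeSet.ncard : ℝ) * Real.sqrt d ≤ C * 2 ^ d ∧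
      (∀ v, ∃ u, Γ.Adj v u) ∧ ¬ Γ.IsMinorOf (hypercube d) := by
  refine ⟨276, by norm_num, fun d => ?_⟩
  set M := d.choose (d / 2)
  have hM : 0 < M := Nat.choose_pos (Nat.div_le_self d 2)
  have : Nontrivial (Fin (12 * M)) := Fin.nontrivial_iff_two_le.2 (by omega)
  let r : Fin (12 * M) := ⟨0, by omega⟩
  obtain ⟨G, hGedges, hG⟩ := exists_linksQuarters (V := Fin (12 * M))
  have hstar := (isTree_starGraph r).card_edgeFinset
  have hedges : (G ⊔ starGraph r).edgeSet.ncard ≤ 276 * M := by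
    rw [edgeSet_sup]
    refine (Set.ncard_union_le _ _).trans ?_
    rw [Set.ncard_eq_toFinset_card' (starGraph r).edgeSet]
    change _ + #(starGraph r).edgeFinset ≤ _
    simp only [Fintype.card_fin] at hGedges hstar
    omega
  refine ⟨12 * M, G ⊔ starGraph r, ?_,
    ((connected_starGraph r).preconnected.mono le_sup_right).exists_adj_of_nontrivial,
    (hG.mono le_sup_left).not_isMinorOf_hypercube (by simp [M])⟩
  calc ((G ⊔ starGraph r).edgeSet.ncard : ℝ) * √d ≤ (276 * M : ℕ) * √d := by gcongr
    _ = 276 * (M * √d) := by push_cast; ring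
    _ ≤ 276 * 2 ^ d := by gcongr; exact choose_half_mul_sqrt_le_two_pow d
end
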